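/- arXiv:1603.02942 — 4 statements merged into one kernel-verified Lean document; each statement's English description precedes it below -/
import Mathlib

section
/- Let B be a set, let ρ : B → Perm(ℕ) be a map into the group of permutations of ℕ, and let ρ̂ : FreeGroup(B) → Perm(ℕ) be the induced group homomorphism. Then the image of ρ̂ is a cofinitary group if and only if for every good word w in the free group on B, the permutation ρ̂(w) is either the identity or has only finitely many fixed points. -/
/-- A permutation of `ℕ` is *cofinitary* if it has only finitely many fixed points. -/
def IsCofinitary (g : Equiv.Perm ℕ) : Prop := {n : ℕ | g n = n}.Finite

/-- A subgroup of `Perm ℕ` is a *cofinitary group* if every non-identity element is cofinitary. -/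
def IsCofinitaryGroup (G : Subgroup (Equiv.Perm ℕ)) : Prop :=
  ∀ g ∈ G, g ≠ 1 → IsCofinitary g

/-- The reduced word of an element of a free group. -/
noncomputable def reducedWord {A : Type*} (w : FreeGroup A) : List (A × Bool) :=
  letI := Classical.decEq A
  w.toWord

/-- A *good word*: a non-identity element of the free group whose reduced word is either a
(nonzero, possibly negative) power of a single generator, or whose first and last letters
involve two distinct generators. -/
def IsGoodWord {A : Type*} (w : FreeGroup A) : Prop :=
  w ≠ 1 ∧
    ((∃ b : A, ∀ x ∈ reducedWord w, x.1 = b) ∨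
      (∀ x y : A × Bool, (reducedWord w).head? = some x →
        (reducedWord w).getLast? = some y → x.1 ≠ y.1))

/-- `s : ℕ →. ℕ` is a finite partial injection. -/
def FinPartInj (s : ℕ →. ℕ) : Prop :=
  s.Dom.Finite ∧ ∀ ⦃n₁ n₂ m : ℕ⦄, m ∈ s n₁ → m ∈ s n₂ → n₁ = n₂

/-- The inverse of a partial function: defined at `m` iff there is a unique `n` mapped to `m`. -/
noncomputable def pfunInv (s : ℕ →. ℕ) : ℕ →. ℕ :=
  fun m => ⟨∃! n, m ∈ s n, fun h => h.choose⟩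

/-- The partial function substituted for a single letter of the alphabet `{a} ∪ B`
(`none` plays the role of the extra symbol `a`): `ρ b` for `b`, `(ρ b)⁻¹` for `b⁻¹`,
`s` for `a` and `s⁻¹` for `a⁻¹`. -/
noncomputable def letterEval {B : Type*} (ρ : B → Equiv.Perm ℕ) (s : ℕ →. ℕ) :
    Option B × Bool → (ℕ →. ℕ)
  | (some b, true) => PFun.lift ⇑(ρ b)
  | (some b, false) => PFun.lift ⇑((ρ b).symm)
  | (none, true) => s
  | (none, false) => pfunInv s

/-- Letter-by-letter partial composition along a word (read right to left). -/
noncomputable def listEval {B : Type*} (ρ : B → Equiv.Perm ℕ) (s : ℕ →. ℕ) :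
    List (Option B × Bool) → (ℕ →. ℕ)
  | [] => PFun.id ℕ
  | x :: u => (letterEval ρ s x).comp (listEval ρ s u)

/-- `e_w[s,ρ]`: the partial function obtained from the reduced word of `w` by substituting
`ρ b` for each `b ∈ B`, and the finite partial injection `s` for the letter `a = none`. -/
noncomputable def wordEval {B : Type*} (ρ : B → Equiv.Perm ℕ) (s : ℕ →. ℕ)
    (w : FreeGroup (Option B)) : ℕ →. ℕ :=
  listEval ρ s (reducedWord w)

/-- A condition of the poset `Q_{{a},ρ}`: a pair `(s, F)` where `s` is a finite partial
injection on `ℕ` and `F` is a finite set of good words on the alphabet `{a} ∪ B`. -/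
def IsCondition {B : Type*} (p : (ℕ →. ℕ) × Set (FreeGroup (Option B))) : Prop :=
  FinPartInj p.1 ∧ p.2.Finite ∧ ∀ w ∈ p.2, IsGoodWord w

/-- The extension relation of `Q_{{a},ρ}`: `q = (t,H)` extends `p = (s,F)` iff `s ⊆ t`,
`F ⊆ H`, and for every `w ∈ F` and `n`, if `e_w[t,ρ](n) = n` then `e_w[s,ρ](n)` is defined. -/
def Extends {B : Type*} (ρ : B → Equiv.Perm ℕ)
    (q p : (ℕ →. ℕ) × Set (FreeGroup (Option B))) : Prop :=
  (∀ ⦃n m : ℕ⦄, m ∈ p.1 n → m ∈ q.1 n) ∧ p.2 ⊆ q.2 ∧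
    ∀ w ∈ p.2, ∀ n : ℕ, n ∈ wordEval ρ q.1 w n → (wordEval ρ p.1 w n).Dom

/-- `s ∪ {(n,m)}`: extend the partial function `s` by the pair `(n,m)`. -/
def pfunExtend (s : ℕ →. ℕ) (n m : ℕ) : ℕ →. ℕ :=
  fun k => if k = n then Part.some m else s k

section GoodConj

open List

variable {A : Type*}

/-- Positive formulation of "no adjacent cancelling pair". -/
private def RedW (L : List (A × Bool)) : Prop :=
  List.Chain' (fun x y : A × Bool => x.1 = y.1 → y.2 = x.2) L

private lemma reduce_eq_self_of_redW [DecidableEq A] {L : List (A × Bool)} (h : RedW L) :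
    FreeGroup.reduce L = L := by
  induction L with
  | nil => rfl
  | cons x t ih =>
    have ht : RedW t := h.tail
    rw [FreeGroup.reduce.cons, ih ht]
    cases t with
    | nil => rfl
    | cons y s =>
      simp only
      rw [if_neg]
      rintro ⟨h1, h2⟩
      have := (List.isChain_cons_cons.mp h).1 h1
      rw [h2] at this
      simp at this

private lemma redW_toWord [DecidableEq A] (w : FreeGroup A) : RedW w.toWord := by
  rw [RedW, List.Chain', List.isChain_iff_getElem]
  intro i hlt
  by_contra hR
  push_neg at hR
  obtain ⟨h1, h2⟩ := hR
  set L := w.toWord with hL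
  have hi1 : i + 1 < L.length := by omega
  have hi : i < L.length := by omega
  have hb : (L.get ⟨i+1, hi1⟩).2 = !(L.get ⟨i, hi⟩).2 := by
    rcases hx : (L.get ⟨i, hi⟩).2 <;> rcases hy : (L.get ⟨i+1, hi1⟩).2 <;> simp_all
  have hy : L.get ⟨i+1, hi1⟩ = ((L.get ⟨i, hi⟩).1, !(L.get ⟨i, hi⟩).2) :=
    Prod.ext h1.symm hb
  have hdecomp : L = L.take i ++ (L.get ⟨i, hi⟩) :: (L.get ⟨i+1, hi1⟩) :: L.drop (i+2) := by
    conv_lhs => rw [← List.take_append_drop i L]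
    congr 1
    rw [List.drop_eq_getElem_cons hi]
    congr 1
    rw [List.drop_eq_getElem_cons hi1]
    rfl
  have hred : FreeGroup.reduce L = L := FreeGroup.reduce_toWord w
  exact FreeGroup.reduce.not (L₂ := L.take i) (L₃ := L.drop (i+2))
    (x := (L.get ⟨i, hi⟩).1) (b := (L.get ⟨i, hi⟩).2)
    (by rw [hred, ← hy, Prod.mk.eta]; exact hdecomp)

private lemma takeWhile_append_of_exists {α : Type*} {p : α → Bool} {u : List α}
    (v : List α) (h : ∃ z ∈ u, p z = false) :
    (u ++ v).takeWhile p = u.takeWhile p := by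
  induction u with
  | nil => simp at h
  | cons a u ih =>
    rcases ha : p a with _ | _
    · simp [List.takeWhile_cons, ha]
    · obtain ⟨z, hz, hzp⟩ := h
      rcases List.mem_cons.mp hz with rfl | hz'
      · rw [ha] at hzp; cases hzp
      · simp only [List.cons_append, List.takeWhile_cons, ha, if_true]
        rw [ih ⟨z, hz', hzp⟩]

/-- Length of the initial block of letters with the same generator as the head. -/
private def lcnt [DecidableEq A] : List (A × Bool) → ℕ
  | [] => 0
  | z :: t => ((z :: t).takeWhile fun p => decide (p.1 = z.1)).length

private lemma lcnt_cons [DecidableEq A] (z : A × Bool) (t : List (A × Bool)) :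
    lcnt (z :: t) = ((z :: t).takeWhile fun p => decide (p.1 = z.1)).length := rfl

private lemma lcnt_le [DecidableEq A] (L : List (A × Bool)) : lcnt L ≤ L.length := by
  cases L with
  | nil => simp [lcnt]
  | cons z t => exact (List.takeWhile_sublist _).length_le

/-- `reducedWord` agrees with `toWord` for any decidability instance. -/
private lemma reducedWord_eq [DecidableEq A] (w : FreeGroup A) :
    reducedWord w = w.toWord := by
  unfold reducedWord
  rw [Subsingleton.elim (Classical.decEq A) ‹DecidableEq A›]

/-- Every nontrivial element of a free group is conjugate to a good word. -/
private lemma exists_good_conj [DecidableEq A] :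
    ∀ (n : ℕ) (w : FreeGroup A),
      w.toWord.length * w.toWord.length + lcnt w.toWord ≤ n → w ≠ 1 →
      ∃ c v : FreeGroup A, IsGoodWord v ∧ w = c * v * c⁻¹ := by
  intro n
  induction n using Nat.strong_induction_on with
  | _ n ih =>
    intro w hμ hw
    have hLne : w.toWord ≠ [] := fun h => hw (FreeGroup.toWord_eq_nil_iff.mp h)
    obtain ⟨x, t, hxt⟩ := List.exists_cons_of_ne_nil hLne
    by_cases hall : ∀ z ∈ w.toWord, z.1 = x.1
    · refine ⟨1, w, ⟨hw, Or.inl ⟨x.1, ?_⟩⟩, by group⟩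
      intro z hz
      rw [reducedWord_eq] at hz
      exact hall z hz
    · have htne : t ≠ [] := by
        rintro rfl
        refine hall fun z hz => ?_
        rw [hxt, List.mem_singleton] at hz
        rw [hz]
      set y := t.getLast htne with hy
      have ht : t.dropLast ++ [y] = t := List.dropLast_append_getLast htne
      set u := t.dropLast with hu
      have hLdecomp : w.toWord = x :: (u ++ [y]) := by rw [ht]; exact hxt
      have hredL : RedW w.toWord := redW_toWord w
      by_cases hxy : x.1 = y.1
      · -- first and last letters involve the same generator
        have hredT : RedW (u ++ [y]) := by
          have := hredL.tail
          rwa [hLdecomp] at this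
        have hredU : RedW u := hredT.infix ⟨[], [y], by simp⟩
        obtain ⟨hu', -, hjunc⟩ := List.isChain_append.mp hredT
        -- a letter with a different generator exists, necessarily in u
        push_neg at hall
        obtain ⟨z₀, hz₀L, hz₀⟩ := hall
        have hz₀u : z₀ ∈ u := by
          rw [hLdecomp] at hz₀L
          rcases List.mem_cons.mp hz₀L with rfl | h2
          · exact absurd rfl hz₀
          · rcases List.mem_append.mp h2 with h | h
            · exact h
            · simp only [List.mem_singleton] at h
              rw [h] at hz₀; exact absurd hxy.symm hz₀
        have hune : u ≠ [] := List.ne_nil_of_mem hz₀u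
        set c := FreeGroup.mk [x] with hc
        have hcinv : FreeGroup.mk [(x.1, !x.2)] = c⁻¹ := by
          rw [hc, FreeGroup.inv_mk]; rfl
        set m := FreeGroup.mk u with hm
        have hwcmc : w = c * m * FreeGroup.mk [y] := by
          rw [hc, hm, FreeGroup.mul_mk, FreeGroup.mul_mk, ← FreeGroup.mk_toWord (x := w),
            hLdecomp]
          rfl
        have hmword : m.toWord = u := by
          rw [hm, FreeGroup.toWord_mk]; exact reduce_eq_self_of_redW hredU
        have hb : y.2 = !x.2 ∨ y.2 = x.2 := by cases y.2 <;> cases x.2 <;> simp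
        rcases hb with hb | hb
        · -- case A: last letter is the inverse of the first: strip and recurse
          have hyx : y = (x.1, !x.2) := Prod.ext hxy.symm hb
          have hwdec : w = c * m * c⁻¹ := by rw [hwcmc, hyx, hcinv]
          have hm1 : m ≠ 1 := by
            intro hm1e
            exact hw (by rw [hwdec, hm1e]; group)
          have hlen : w.toWord.length = u.length + 2 := by
            rw [hLdecomp]; simp
          have hlt : m.toWord.length * m.toWord.length + lcnt m.toWord < n := by
            have h1 := lcnt_le m.toWord
            have h2 := hμ
            rw [hlen] at h2
            rw [hmword] at h1 ⊢
            nlinarith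
          obtain ⟨d, v, hv, hmd⟩ := ih _ hlt m le_rfl hm1
          exact ⟨c * d, v, hv, by rw [hwdec, hmd]; group⟩
        · -- case B: last letter equals the first: rotate
          have hyx : y = x := Prod.ext hxy.symm hb
          have hredL' : RedW (u ++ [x, x]) := by
            rw [RedW, List.Chain', List.isChain_append]
            refine ⟨hu', List.isChain_pair.mpr (fun _ => rfl), ?_⟩
            intro p hp q hq
            simp only [List.head?_cons, Option.mem_def, Option.some_inj] at hq
            subst hq
            have := hjunc p hp y (by simp)
            rwa [hyx] at this
          set w' := FreeGroup.mk (u ++ [x, x]) with hw'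
          have hw'word : w'.toWord = u ++ [x, x] := by
            rw [hw', FreeGroup.toWord_mk]; exact reduce_eq_self_of_redW hredL'
          have hw'1 : w' ≠ 1 := by
            intro h
            rw [← FreeGroup.toWord_eq_nil_iff, hw'word] at h
            simp at h
          have hw'dec : w' = m * c * c := by
            rw [hw', hm, hc, FreeGroup.mul_mk, FreeGroup.mul_mk]
            congr 1
            simp
          have hwconj : w = c * w' * c⁻¹ := by
            rw [hwcmc, hyx, ← hc, hw'dec]
            group
          obtain ⟨z, u', hzu⟩ := List.exists_cons_of_ne_nil hune
          by_cases hz : z.1 = x.1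
          · -- rotate and recurse: the leading-block length decreases
            set pb : A × Bool → Bool := fun p => decide (p.1 = x.1) with hpb
            have hwit : ∃ p ∈ u, pb p = false := ⟨z₀, hz₀u, by simp [hpb, hz₀]⟩
            have hlcL : lcnt w.toWord = (u.takeWhile pb).length + 1 := by
              rw [hLdecomp, lcnt_cons, List.takeWhile_cons]
              simp only [hpb, decide_true, if_true]
              rw [takeWhile_append_of_exists _ hwit]
              simp [hpb]
            have hlcL' : lcnt w'.toWord = (u.takeWhile pb).length := by
              rw [hw'word, hzu, List.cons_append, lcnt_cons, ← List.cons_append, ← hzu]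
              have hfn : (fun p : A × Bool => decide (p.1 = z.1)) = pb := by
                funext p; simp [hpb, hz]
              rw [hfn, takeWhile_append_of_exists _ hwit]
            have hlen : w'.toWord.length = w.toWord.length := by
              rw [hw'word, hLdecomp]; simp
            have hlt : w'.toWord.length * w'.toWord.length + lcnt w'.toWord < n := by
              rw [hlen, hlcL']
              have h2 := hμ
              rw [hlcL] at h2
              omega
            obtain ⟨d, v, hv, hmd⟩ := ih _ hlt w' le_rfl hw'1
            exact ⟨c * d, v, hv, by rw [hwconj, hmd]; group⟩
          · -- the rotated word is already good
            refine ⟨c, w', ⟨hw'1, Or.inr ?_⟩, hwconj⟩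
            intro p q hp hq
            rw [reducedWord_eq, hw'word] at hp hq
            rw [hzu, List.cons_append, List.head?_cons, Option.some_inj] at hp
            rw [show u ++ [x, x] = (u ++ [x]) ++ [x] by simp, List.getLast?_concat,
              Option.some_inj] at hq
            subst hp hq
            exact hz
      · -- first and last letters involve distinct generators: already good
        refine ⟨1, w, ⟨hw, Or.inr ?_⟩, by group⟩
        intro p q hp hq
        rw [reducedWord_eq] at hp hq
        rw [hLdecomp, List.head?_cons, Option.some_inj] at hp
        rw [hLdecomp, show x :: (u ++ [y]) = (x :: u) ++ [y] by simp,
          List.getLast?_concat, Option.some_inj] at hq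
        subst hp hq
        exact hxy

end GoodConj

/-- The image of `ρ̂ : FreeGroup B → Perm ℕ` is a cofinitary group iff for every good word `w`,
the permutation `ρ̂(w)` is the identity or has only finitely many fixed points. -/
theorem cofinitaryRange_iff_goodWords {B : Type*} (ρ : B → Equiv.Perm ℕ) :
    IsCofinitaryGroup (FreeGroup.lift ρ).range ↔
      ∀ w : FreeGroup B, IsGoodWord w →
        (FreeGroup.lift ρ w = 1 ∨ IsCofinitary (FreeGroup.lift ρ w)) := by
  classical
  constructor
  · intro hG w hgood
    by_cases h1 : FreeGroup.lift ρ w = 1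
    · exact Or.inl h1
    · exact Or.inr (hG _ ⟨w, rfl⟩ h1)
  · rintro h g ⟨w, rfl⟩ hg1
    have hw : w ≠ 1 := by rintro rfl; exact hg1 (map_one _)
    obtain ⟨c, v, hv, hconj⟩ := exists_good_conj _ w le_rfl hw
    rcases h v hv with h1 | h1
    · exfalso
      apply hg1
      rw [hconj, map_mul, map_mul, map_inv, h1]
      group
    · have hsub : {n : ℕ | (FreeGroup.lift ρ) w n = n} ⊆
          (FreeGroup.lift ρ c) '' {n : ℕ | (FreeGroup.lift ρ) v n = n} := by
        intro n hn
        simp only [Set.mem_setOf_eq] at hn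
        refine ⟨(FreeGroup.lift ρ c)⁻¹ n, ?_, ?_⟩
        · simp only [Set.mem_setOf_eq]
          have : (FreeGroup.lift ρ) w n =
              (FreeGroup.lift ρ c) ((FreeGroup.lift ρ) v ((FreeGroup.lift ρ c)⁻¹ n)) := by
            rw [hconj, map_mul, map_mul, map_inv]
            rfl
          rw [this] at hn
          have := congrArg ((FreeGroup.lift ρ c)⁻¹ : Equiv.Perm ℕ) hn
          simpa using this
        · simp
      exact Set.Finite.subset (Set.Finite.image _ h1) hsub
end

section
/- (Domain Extension) Let B be a set, a ∉ B, and let ρ : B → Perm(ℕ) be such that the induced homomorphism ρ̂ : FreeGroup(B) → Perm(ℕ) is injective and its image is a cofinitary group. Let (s,F) be a condition of Q_{{a},ρ}, let n ∈ ℕ with n ∉ dom(s), and let s* be a finite set of bijections from ℕ to ℕ. Then for all but finitely many m ∈ ℕ, the pair (s ∪ {(n,m)}, F) is a condition of Q_{{a},ρ} extending (s,F) and moreover m ≠ f(n) for every f ∈ s*. -/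
namespace DomExt
open List

variable {B : Type*} {ρ : B → Equiv.Perm ℕ} {s : ℕ →. ℕ} {n m : ℕ}

/-- no-cancellation relation between adjacent letters -/
def NC {A : Type*} (a b : A × Bool) : Prop := a.1 = b.1 → a.2 = b.2

theorem mem_listEval_nil {r k : ℕ} : r ∈ listEval ρ s [] k ↔ r = k := by
  simp [listEval, PFun.id, Part.mem_some_iff]

theorem mem_listEval_cons {x : Option B × Bool} {u : List (Option B × Bool)} {r k : ℕ} :
    r ∈ listEval ρ s (x :: u) k ↔ ∃ v, v ∈ listEval ρ s u k ∧ r ∈ letterEval ρ s x v := by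
  simp [listEval, PFun.comp_apply, Part.mem_bind_iff]
  exact Part.mem_bind_iff

theorem mem_listEval_append {u₁ u₂ : List (Option B × Bool)} {r k : ℕ} :
    r ∈ listEval ρ s (u₁ ++ u₂) k ↔ ∃ v, v ∈ listEval ρ s u₂ k ∧ r ∈ listEval ρ s u₁ v := by
  induction u₁ generalizing r with
  | nil => simp [mem_listEval_nil]
    
  | cons x u ih =>
    rw [List.cons_append]
    constructor
    · intro h
      rcases mem_listEval_cons.1 h with ⟨v, hv, hx⟩
      rcases ih.1 hv with ⟨v2, h2, h1⟩
      exact ⟨v2, h2, mem_listEval_cons.2 ⟨v, h1, hx⟩⟩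
    · rintro ⟨v2, h2, h⟩
      rcases mem_listEval_cons.1 h with ⟨v, h1, hx⟩
      exact mem_listEval_cons.2 ⟨v, ih.2 ⟨v2, h2, h1⟩, hx⟩

theorem mem_pfunInv {f : ℕ →. ℕ} (hf : ∀ ⦃k₁ k₂ v : ℕ⦄, v ∈ f k₁ → v ∈ f k₂ → k₁ = k₂)
    {r v : ℕ} : r ∈ pfunInv f v ↔ v ∈ f r := by
  constructor
  · rintro ⟨h, rfl⟩; exact h.choose_spec.1
  · intro hr
    have hex : ∃! k, v ∈ f k := ⟨r, hr, fun y hy => hf hy hr⟩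
    exact ⟨hex, hf hex.choose_spec.1 hr⟩

theorem ran_finite (h : s.Dom.Finite) : s.ran.Finite := by
  have : s.ran ⊆ ⋃ a ∈ s.Dom, {b | b ∈ s a} := by
    rintro b ⟨a, ha⟩
    exact Set.mem_biUnion (Part.dom_iff_mem.2 ⟨b, ha⟩) ha
  refine Set.Finite.subset (Set.Finite.biUnion h fun a _ => ?_) this
  have : {b | b ∈ s a}.Subsingleton := fun x hx y hy => Part.mem_unique hx hy
  exact this.finite


theorem letter_shadow {x : Option B × Bool} {v v' : ℕ} (hx : x.1 = (none : Option B))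
    (h : v ∈ letterEval ρ s x v') : v' ∈ s.Dom ∪ s.ran := by
  obtain ⟨o, e⟩ := x
  cases o with
  | none =>
    cases e with
    | true =>
      exact Or.inl (Part.dom_iff_mem.2 ⟨v, h⟩)
    | false =>
      rcases h with ⟨hd, rfl⟩
      exact Or.inr ⟨hd.choose, hd.choose_spec.1⟩
  | some b => simp at hx

theorem segFinT (hs : FinPartInj s) (u : List (Option B × Bool)) (T : Set ℕ) (hT : T.Finite) :
    {m' : ℕ | ∃ v, v ∈ listEval ρ s u m' ∧ v ∈ T}.Finite := by
  induction u generalizing T with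
  | nil =>
    refine hT.subset ?_
    rintro m' ⟨v, hv, hvT⟩
    rwa [mem_listEval_nil.1 hv] at hvT
  | cons x u ih =>
    obtain ⟨o, e⟩ := x
    cases o with
    | some b =>
      have key : {m' : ℕ | ∃ v, v ∈ listEval ρ s ((some b, e) :: u) m' ∧ v ∈ T} ⊆
          {m' : ℕ | ∃ v', v' ∈ listEval ρ s u m' ∧ v' ∈
            (fun z => (if e then ρ b else (ρ b)⁻¹).symm z) '' T} := by
        rintro m' ⟨v, hv, hvT⟩
        rcases mem_listEval_cons.1 hv with ⟨v', hv', hx⟩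
        refine ⟨v', hv', ⟨v, hvT, ?_⟩⟩
        have hv2 : v = (if e then ρ b else (ρ b)⁻¹) v' := by
          cases e <;>
            simpa [letterEval, PFun.lift, Part.mem_some_iff, Equiv.Perm.inv_def] using hx
        cases e <;> simp [hv2, Equiv.Perm.inv_def]
      exact (ih _ (hT.image _)).subset key
    | none =>
      have key : {m' : ℕ | ∃ v, v ∈ listEval ρ s ((none, e) :: u) m' ∧ v ∈ T} ⊆
          {m' : ℕ | ∃ v', v' ∈ listEval ρ s u m' ∧ v' ∈ s.Dom ∪ s.ran} := by
        rintro m' ⟨v, hv, _⟩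
        rcases mem_listEval_cons.1 hv with ⟨v', hv', hx⟩
        exact ⟨v', hv', letter_shadow rfl hx⟩
      exact (ih _ (hs.1.union (ran_finite hs.1))).subset key


/-- embedding of pure-B letters -/
def emb {B : Type*} (p : B × Bool) : Option B × Bool := (some p.1, p.2)

theorem lift_mk_cons (b : B) (e : Bool) (c : List (B × Bool)) :
    FreeGroup.lift ρ (FreeGroup.mk ((b, e) :: c)) =
      (if e then ρ b else (ρ b)⁻¹) * FreeGroup.lift ρ (FreeGroup.mk c) := by
  have h1 : FreeGroup.mk ((b, e) :: c) = FreeGroup.mk [(b, e)] * FreeGroup.mk c := by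
    rw [FreeGroup.mul_mk]; rfl
  rw [h1, map_mul]
  congr 1
  cases e with
  | true => exact FreeGroup.lift_apply_of
  | false =>
    have h2 : FreeGroup.mk [(b, false)] = (FreeGroup.of b)⁻¹ := by
      rw [FreeGroup.of, FreeGroup.inv_mk]; rfl
    rw [h2, map_inv, FreeGroup.lift_apply_of]; simp

theorem segFinP (hcof : IsCofinitaryGroup (FreeGroup.lift ρ).range)
    (hs : FinPartInj s) (u : List (Option B × Bool)) (π : Equiv.Perm ℕ)
    (hπ : π ∈ (FreeGroup.lift ρ).range)
    (H : ∀ c : List (B × Bool), u = c.map emb →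
      π * FreeGroup.lift ρ (FreeGroup.mk c) ≠ 1) :
    {m' : ℕ | ∃ v, v ∈ listEval ρ s u m' ∧ (π v = n ∨ π v = m')}.Finite := by
  induction u generalizing π with
  | nil =>
    have hne : π ≠ 1 := by
      have := H [] rfl
      simpa [FreeGroup.one_eq_mk.symm] using this
    have hfix : {x : ℕ | π x = x}.Finite := hcof π hπ hne
    refine (hfix.union (Set.finite_singleton (π.symm n))).subset ?_
    rintro m' ⟨v, hv, hvt⟩
    rcases mem_listEval_nil.1 hv with rfl
    rcases hvt with h | h
    · exact Or.inr (by simp [← h])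
    · exact Or.inl h
  | cons x u ih =>
    obtain ⟨o, e⟩ := x
    cases o with
    | some b =>
      set σ : Equiv.Perm ℕ := if e then ρ b else (ρ b)⁻¹ with hσ
      have hσr : σ ∈ (FreeGroup.lift ρ).range := by
        cases e with
        | true => exact ⟨FreeGroup.of b, FreeGroup.lift_apply_of⟩
        | false => exact ⟨(FreeGroup.of b)⁻¹, by simp [FreeGroup.lift_apply_of, hσ]⟩
      have key : {m' : ℕ | ∃ v, v ∈ listEval ρ s ((some b, e) :: u) m' ∧
            (π v = n ∨ π v = m')} ⊆
          {m' : ℕ | ∃ v', v' ∈ listEval ρ s u m' ∧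
            ((π * σ) v' = n ∨ (π * σ) v' = m')} := by
        rintro m' ⟨v, hv, hvt⟩
        rcases mem_listEval_cons.1 hv with ⟨v', hv', hx⟩
        have hv2 : v = σ v' := by
          cases e <;>
            simpa [letterEval, PFun.lift, Part.mem_some_iff, Equiv.Perm.inv_def, hσ] using hx
        refine ⟨v', hv', ?_⟩
        simpa [hv2] using hvt
      refine (ih (π * σ) (mul_mem hπ hσr) ?_).subset key
      intro c hc
      have := H ((b, e) :: c) (by rw [hc]; rfl)
      rwa [lift_mk_cons, ← mul_assoc] at this
    | none =>
      have key : {m' : ℕ | ∃ v, v ∈ listEval ρ s ((none, e) :: u) m' ∧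
            (π v = n ∨ π v = m')} ⊆
          {m' : ℕ | ∃ v', v' ∈ listEval ρ s u m' ∧ v' ∈ s.Dom ∪ s.ran} := by
        rintro m' ⟨v, hv, _⟩
        rcases mem_listEval_cons.1 hv with ⟨v', hv', hx⟩
        exact ⟨v', hv', letter_shadow rfl hx⟩
      exact (segFinT hs u _ (hs.1.union (ran_finite hs.1))).subset key


/-- Freshness of the new value `m`. -/
def Fresh (s : ℕ →. ℕ) (n m : ℕ) : Prop := m ∉ s.Dom ∧ m ∉ s.ran ∧ m ≠ n

theorem mem_pfunExtend {k r : ℕ} :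
    r ∈ pfunExtend s n m k ↔ (k = n ∧ r = m) ∨ (k ≠ n ∧ r ∈ s k) := by
  unfold pfunExtend
  split_ifs with h
  · simp [h, Part.mem_some_iff, eq_comm]
  · simp [h]

theorem pfunExtend_dom : (pfunExtend s n m).Dom = insert n s.Dom := by
  ext k
  simp only [PFun.mem_dom, Set.mem_insert_iff]
  constructor
  · rintro ⟨y, hy⟩
    rcases mem_pfunExtend.1 hy with ⟨rfl, _⟩ | ⟨_, hy⟩
    · exact Or.inl rfl
    · exact Or.inr ⟨y, hy⟩
  · rintro (rfl | hk)
    · exact ⟨m, mem_pfunExtend.2 (Or.inl ⟨rfl, rfl⟩)⟩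
    · by_cases hkn : k = n
      · exact ⟨m, mem_pfunExtend.2 (Or.inl ⟨hkn, rfl⟩)⟩
      · rcases hk with ⟨y, hy⟩
        exact ⟨y, mem_pfunExtend.2 (Or.inr ⟨hkn, hy⟩)⟩

theorem pfunExtend_inj (hs : FinPartInj s) (hm : Fresh s n m) :
    ∀ ⦃k₁ k₂ v : ℕ⦄, v ∈ pfunExtend s n m k₁ → v ∈ pfunExtend s n m k₂ → k₁ = k₂ := by
  rintro k₁ k₂ v h₁ h₂
  rcases mem_pfunExtend.1 h₁ with ⟨e1, e2⟩ | ⟨hk₁, h₁'⟩ <;>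
    rcases mem_pfunExtend.1 h₂ with ⟨e3, e4⟩ | ⟨hk₂, h₂'⟩
  · rw [e1, e3]
  · exact absurd ⟨k₂, e2 ▸ h₂'⟩ hm.2.1
  · exact absurd ⟨k₁, e4 ▸ h₁'⟩ hm.2.1
  · exact hs.2 h₁' h₂'

/-- dichotomy for a single letter over the extended map. -/
theorem letter_cases (hs : FinPartInj s) (hm : Fresh s n m)
    {x : Option B × Bool} {v r : ℕ}
    (h : r ∈ letterEval ρ (pfunExtend s n m) x v) :
    r ∈ letterEval ρ s x v ∨ (x = (none, true) ∧ v = n ∧ r = m) ∨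
      (x = (none, false) ∧ v = m ∧ r = n) := by
  obtain ⟨o, e⟩ := x
  cases o with
  | some b => cases e <;> exact Or.inl h
  | none =>
    cases e with
    | true =>
      rcases mem_pfunExtend.1 h with ⟨rfl, rfl⟩ | ⟨_, h⟩
      · exact Or.inr (Or.inl ⟨rfl, rfl, rfl⟩)
      · exact Or.inl h
    | false =>
      have hvr : v ∈ pfunExtend s n m r :=
        (mem_pfunInv (pfunExtend_inj hs hm)).1 h
      rcases mem_pfunExtend.1 hvr with ⟨rfl, rfl⟩ | ⟨hrn, hvr⟩
      · exact Or.inr (Or.inr ⟨rfl, rfl, rfl⟩)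
      · exact Or.inl ((mem_pfunInv hs.2).2 hvr)

theorem letter_mono (hs : FinPartInj s) (hnd : n ∉ s.Dom) (hm : Fresh s n m)
    {x : Option B × Bool} {v r : ℕ}
    (h : r ∈ letterEval ρ s x v) : r ∈ letterEval ρ (pfunExtend s n m) x v := by
  obtain ⟨o, e⟩ := x
  cases o with
  | some b => cases e <;> exact h
  | none =>
    cases e with
    | true =>
      refine mem_pfunExtend.2 (Or.inr ⟨?_, h⟩)
      rintro rfl
      exact hnd (Part.dom_iff_mem.2 ⟨r, h⟩)
    | false =>
      have hvr : v ∈ s r := (mem_pfunInv hs.2).1 h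
      refine (mem_pfunInv (pfunExtend_inj hs hm)).2 (mem_pfunExtend.2 (Or.inr ⟨?_, hvr⟩))
      rintro rfl
      exact hnd (Part.dom_iff_mem.2 ⟨v, hvr⟩)

theorem listEval_mono (hs : FinPartInj s) (hnd : n ∉ s.Dom) (hm : Fresh s n m)
    {u : List (Option B × Bool)} {k r : ℕ}
    (h : r ∈ listEval ρ s u k) : r ∈ listEval ρ (pfunExtend s n m) u k := by
  induction u generalizing r with
  | nil => exact h
  | cons x u ih =>
    rcases mem_listEval_cons.1 h with ⟨v, hv, hx⟩
    exact mem_listEval_cons.2 ⟨v, ih hv, letter_mono hs hnd hm hx⟩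

/-- extraction of the last (in application order) use of the new pair. -/
theorem lastUse (hs : FinPartInj s) (hm : Fresh s n m)
    {l : List (Option B × Bool)} {k r : ℕ}
    (h : r ∈ listEval ρ (pfunExtend s n m) l k) :
    r ∈ listEval ρ s l k ∨
      ∃ l₁ x l₂, l = l₁ ++ x :: l₂ ∧
        ((x = ((none : Option B), true) ∧ n ∈ listEval ρ (pfunExtend s n m) l₂ k ∧
            r ∈ listEval ρ s l₁ m) ∨
          (x = ((none : Option B), false) ∧ m ∈ listEval ρ (pfunExtend s n m) l₂ k ∧
            r ∈ listEval ρ s l₁ n)) := by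
  induction l generalizing r with
  | nil => exact Or.inl h
  | cons x l ih =>
    rcases mem_listEval_cons.1 h with ⟨v, hv, hx⟩
    rcases letter_cases hs hm hx with hc | ⟨rfl, rfl, rfl⟩ | ⟨rfl, rfl, rfl⟩
    · rcases ih hv with hcl | ⟨l₁, y, l₂, rfl, hcase⟩
      · exact Or.inl (mem_listEval_cons.2 ⟨v, hcl, hc⟩)
      · refine Or.inr ⟨x :: l₁, y, l₂, rfl, ?_⟩
        rcases hcase with ⟨hy, hb, ht⟩ | ⟨hy, hb, ht⟩
        · exact Or.inl ⟨hy, hb, mem_listEval_cons.2 ⟨v, ht, hc⟩⟩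
        · exact Or.inr ⟨hy, hb, mem_listEval_cons.2 ⟨v, ht, hc⟩⟩
    · exact Or.inr ⟨[], _, l, rfl, Or.inl ⟨rfl, hv, mem_listEval_nil.2 rfl⟩⟩
    · exact Or.inr ⟨[], _, l, rfl, Or.inr ⟨rfl, hv, mem_listEval_nil.2 rfl⟩⟩

/-- extraction of the first (in application order) use of the new pair. -/
theorem firstUse (hs : FinPartInj s) (hnd : n ∉ s.Dom) (hm : Fresh s n m)
    {l : List (Option B × Bool)} {k r : ℕ}
    (h : r ∈ listEval ρ (pfunExtend s n m) l k) :
    r ∈ listEval ρ s l k ∨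
      ∃ l₁ y l₂, l = l₁ ++ y :: l₂ ∧
        ((y = ((none : Option B), true) ∧ n ∈ listEval ρ s l₂ k ∧
            r ∈ listEval ρ (pfunExtend s n m) l₁ m) ∨
          (y = ((none : Option B), false) ∧ m ∈ listEval ρ s l₂ k ∧
            r ∈ listEval ρ (pfunExtend s n m) l₁ n)) := by
  induction l generalizing r with
  | nil => exact Or.inl h
  | cons x l ih =>
    rcases mem_listEval_cons.1 h with ⟨v, hv, hx⟩
    rcases ih hv with hcl | ⟨l₁, y, l₂, rfl, hcase⟩
    · rcases letter_cases hs hm hx with hc | ⟨rfl, rfl, rfl⟩ | ⟨rfl, rfl, rfl⟩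
      · exact Or.inl (mem_listEval_cons.2 ⟨v, hcl, hc⟩)
      · exact Or.inr ⟨[], _, l, rfl, Or.inl ⟨rfl, hcl, mem_listEval_nil.2 rfl⟩⟩
      · exact Or.inr ⟨[], _, l, rfl, Or.inr ⟨rfl, hcl, mem_listEval_nil.2 rfl⟩⟩
    · refine Or.inr ⟨x :: l₁, y, l₂, rfl, ?_⟩
      rcases hcase with ⟨hy, hb, ht⟩ | ⟨hy, hb, ht⟩
      · exact Or.inl ⟨hy, hb, mem_listEval_cons.2 ⟨v, ht, hx⟩⟩
      · exact Or.inr ⟨hy, hb, mem_listEval_cons.2 ⟨v, ht, hx⟩⟩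


theorem not_chain'_decomp {A : Type*} :
    ∀ {u : List (A × Bool)}, ¬ List.Chain' NC u →
      ∃ (L₂ : List (A × Bool)) (x : A) (b : Bool) (L₃ : List (A × Bool)),
        u = L₂ ++ (x, b) :: (x, !b) :: L₃ := by
  intro u
  induction u with
  | nil => intro h; exact absurd List.isChain_nil h
  | cons x u ih =>
    intro h
    cases u with
    | nil => exact absurd (List.isChain_singleton x) h
    | cons y u' =>
      replace h : ¬ (NC x y ∧ List.Chain' NC (y :: u')) := fun hc => h (List.isChain_cons_cons.2 hc)
      by_cases hxy : NC x y
      · rcases ih (fun hc => h ⟨hxy, hc⟩) with ⟨L₂, z, b, L₃, hdec⟩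
        exact ⟨x :: L₂, z, b, L₃, by rw [hdec]; rfl⟩
      · unfold NC at hxy
        push_neg at hxy
        refine ⟨[], x.1, x.2, u', ?_⟩
        have hy : y = (x.1, !x.2) := by
          obtain ⟨h1, h2⟩ := hxy
          obtain ⟨y1, y2⟩ := y
          obtain ⟨x1, x2⟩ := x
          simp only at h1 h2 ⊢
          subst h1
          revert h2; cases x2 <;> cases y2 <;> simp
        rw [← hy]; rfl

theorem chain'_reducedWord {A : Type*} (w : FreeGroup A) :
    List.Chain' NC (reducedWord w) := by
  classical
  by_contra h
  rcases not_chain'_decomp h with ⟨L₂, x, b, L₃, hdec⟩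
  letI := Classical.decEq A
  have hred : FreeGroup.reduce (reducedWord w) = reducedWord w := by
    simp only [reducedWord]; exact FreeGroup.reduce_toWord w
  rw [hdec] at hred
  exact FreeGroup.reduce.not hred

theorem chain'_NC_reduce_eq {A : Type*} [DecidableEq A] :
    ∀ {c : List (A × Bool)}, List.Chain' NC c → FreeGroup.reduce c = c := by
  intro c
  induction c with
  | nil => intro _; rfl
  | cons x c ih =>
    intro h
    replace h := List.isChain_cons.1 h
    rw [FreeGroup.reduce.cons, ih h.2]
    cases c with
    | nil => rfl
    | cons y c' =>
      have hxy : NC x y := h.1 y rfl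
      have : ¬ (x.1 = y.1 ∧ x.2 = !y.2) := by
        rintro ⟨h1, h2⟩
        have := hxy h1
        rw [this] at h2
        exact (Bool.not_ne_self y.2).elim (by rw [← h2])
      simp only [this, if_false]

/-- a reduced nonempty pure-`B` word evaluates to a non-identity permutation. -/
theorem hred_of_chain (hinj : Function.Injective (FreeGroup.lift ρ))
    {u : List (Option B × Bool)} (hu : List.Chain' NC u) (hne : u ≠ []) :
    ∀ c : List (B × Bool), u = c.map emb → FreeGroup.lift ρ (FreeGroup.mk c) ≠ 1 := by
  intro c hc h1
  letI := Classical.decEq B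
  have hcne : c ≠ [] := by rintro rfl; exact hne hc
  have hcch : List.Chain' NC c := by
    rw [hc] at hu
    exact List.isChain_of_isChain_map emb
      (fun a b hab h1 => by
        have : (emb a).1 = (emb b).1 := by simp [emb, h1]
        have := hab this
        simpa [emb] using this) hu
  have hmk : FreeGroup.mk c = 1 := hinj (by rw [h1, map_one])
  have : (FreeGroup.mk c).toWord = [] := by rw [hmk, FreeGroup.toWord_one]
  rw [FreeGroup.toWord_mk, chain'_NC_reduce_eq hcch] at this
  exact hcne this


theorem sign_const {A : Type*} {b : A} :
    ∀ {l : List (A × Bool)}, List.Chain' NC l → (∀ z ∈ l, z.1 = b) →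
      ∀ x ∈ l.head?, ∀ z ∈ l, z.2 = x.2 := by
  intro l
  induction l with
  | nil => intro _ _ x hx; simp at hx
  | cons x l ih =>
    intro hch hgen y hy z hz
    rw [List.head?_cons, Option.mem_some_iff] at hy
    subst hy
    rcases List.mem_cons.1 hz with rfl | hz
    · rfl
    · cases l with
      | nil => simp at hz
      | cons w l' =>
        have hxw : NC x w := (List.isChain_cons_cons.1 hch).1
        have hw2 : w.2 = x.2 := Eq.symm (hxw (by
          rw [hgen x List.mem_cons_self, hgen w (by simp)]))
        have := ih (List.isChain_cons_cons.1 hch).2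
          (fun z hz => hgen z (List.mem_cons_of_mem _ hz)) w rfl z hz
        rw [this, hw2]

theorem good_cyc {w : FreeGroup (Option B)} (hw : IsGoodWord w) :
    ∀ x ∈ (reducedWord w).getLast?, ∀ y ∈ (reducedWord w).head?, NC x y := by
  intro x hx y hy
  rcases hw.2 with ⟨b, hb⟩ | hd
  · intro _
    have hxm : x ∈ reducedWord w := List.mem_of_mem_getLast? hx
    have hym : y ∈ reducedWord w := List.mem_of_mem_head? hy
    have h1 := sign_const (b := b) (chain'_reducedWord w) hb y hy x hxm
    have h2 := sign_const (b := b) (chain'_reducedWord w) hb y hy y hym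
    rw [h1, h2]
  · intro h1
    exact absurd h1.symm (hd y x hy hx)


theorem NC_false_true {x' : Option B × Bool} (h : NC ((none : Option B), false) x')
    (hx' : x' = ((none : Option B), true)) : False := by
  subst hx'
  simpa using h rfl

/-- The main combinatorial argument, for a single good word. -/
theorem mainArg (hinj : Function.Injective (FreeGroup.lift ρ))
    (hs : FinPartInj s) (hnd : n ∉ s.Dom) (hm : Fresh s n m)
    {l : List (Option B × Bool)}
    (hch : List.Chain' NC l)
    (hcyc : ∀ x ∈ l.getLast?, ∀ y ∈ l.head?, NC x y)
    (hQ : ∀ u₁ u₂ : List (Option B × Bool), u₁ <+ l → u₂ <+ l →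
      (¬ (n ∈ listEval ρ s (u₁ ++ u₂) m)) ∧ (¬ (m ∈ listEval ρ s (u₁ ++ u₂) n)) ∧
        ((∀ c : List (B × Bool), u₁ ++ u₂ = c.map emb →
            FreeGroup.lift ρ (FreeGroup.mk c) ≠ 1) →
          ¬ (m ∈ listEval ρ s (u₁ ++ u₂) m)))
    {k : ℕ} (h : k ∈ listEval ρ (pfunExtend s n m) l k) :
    (listEval ρ s l k).Dom := by
  rcases lastUse hs hm h with hcl | ⟨l₁, x, l₂, heq, hcase⟩
  · exact Part.dom_iff_mem.2 ⟨k, hcl⟩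
  exfalso
  subst heq
  -- sublist facts
  have sub₁ : l₁ <+ l₁ ++ x :: l₂ := List.sublist_append_left _ _
  have sub₂ : l₂ <+ l₁ ++ x :: l₂ :=
    ((List.sublist_cons_self x l₂).trans (List.sublist_append_right l₁ _))
  rcases hcase with ⟨hx, hb, ht⟩ | ⟨hx, hb, ht⟩
  · -- last use forward: x = a, input n, k ∈ listEval s l₁ m
    rcases firstUse hs hnd hm hb with hb' | ⟨l₃, y, l₄, heq₂, hcase₂⟩
    · exact (hQ l₂ l₁ sub₂ sub₁).1 (mem_listEval_append.2 ⟨k, ht, hb'⟩)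
    subst heq₂
    have sub₃ : l₃ <+ l₁ ++ x :: (l₃ ++ y :: l₄) :=
      (List.sublist_append_left _ _).trans sub₂
    have sub₄ : l₄ <+ l₁ ++ x :: (l₃ ++ y :: l₄) :=
      (((List.sublist_cons_self y l₄).trans (List.sublist_append_right l₃ _))).trans sub₂
    rcases hcase₂ with ⟨hy, hb₄, _⟩ | ⟨hy, hb₄, _⟩
    · exact (hQ l₄ l₁ sub₄ sub₁).1 (mem_listEval_append.2 ⟨k, ht, hb₄⟩)
    · -- first use backward: m ∈ listEval s l₄ k, so m ∈ listEval s (l₄ ++ l₁) m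
      subst hx; subst hy
      -- l₄ ++ l₁ is nonempty
      have hne : ¬(l₄ = [] ∧ l₁ = []) := by
        rintro ⟨rfl, rfl⟩
        have hhead : ([] ++ ((none : Option B), true) ::
            (l₃ ++ ((none : Option B), false) :: [])).head? = some ((none : Option B), true) := rfl
        have hlast : ([] ++ ((none : Option B), true) ::
            (l₃ ++ ((none : Option B), false) :: [])).getLast? =
            some ((none : Option B), false) := by
          rw [List.nil_append,
            show ((none : Option B), true) :: (l₃ ++ [((none : Option B), false)]) =
              (((none : Option B), true) :: l₃) ++ [((none : Option B), false)] from rfl,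
            List.getLast?_concat]
        have := hcyc _ hlast _ hhead
        simpa using this rfl
      -- Chain' NC (l₄ ++ l₁)
      have hch₄ : List.Chain' NC l₄ :=
        hch.infix ⟨l₁ ++ ((none : Option B), true) :: l₃ ++ [((none : Option B), false)], [],
          by simp⟩
      have hch₁ : List.Chain' NC l₁ := hch.infix ⟨[], _, rfl⟩
      have hjun : ∀ a ∈ l₄.getLast?, ∀ b ∈ l₁.head?, NC a b := by
        intro a ha b hb
        have h₄ne : l₄ ≠ [] := by rintro rfl; simp at ha
        have h₁ne : l₁ ≠ [] := by rintro rfl; simp at hb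
        have e₁ : (l₁ ++ ((none : Option B), true) ::
            (l₃ ++ ((none : Option B), false) :: l₄)) =
            (l₁ ++ ((none : Option B), true) :: l₃ ++ [((none : Option B), false)]) ++ l₄ := by
          simp
        have hlast : (l₁ ++ ((none : Option B), true) ::
            (l₃ ++ ((none : Option B), false) :: l₄)).getLast? = l₄.getLast? := by
          rw [e₁, List.getLast?_append_of_ne_nil _ h₄ne]
        have hhead : (l₁ ++ ((none : Option B), true) ::
            (l₃ ++ ((none : Option B), false) :: l₄)).head? = l₁.head? := by
          rw [List.head?_append_of_ne_nil _ h₁ne]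
        exact hcyc a (by rw [hlast]; exact ha) b (by rw [hhead]; exact hb)
      have hchain : List.Chain' NC (l₄ ++ l₁) := List.isChain_append.2 ⟨hch₄, hch₁, hjun⟩
      have hredp : ∀ c : List (B × Bool), l₄ ++ l₁ = c.map emb →
          FreeGroup.lift ρ (FreeGroup.mk c) ≠ 1 :=
        hred_of_chain hinj hchain (by
          rintro hnil
          rcases List.append_eq_nil_iff.1 hnil with ⟨h4, h1⟩
          exact hne ⟨h4, h1⟩)
      exact (hQ l₄ l₁ sub₄ sub₁).2.2 hredp (mem_listEval_append.2 ⟨k, ht, hb₄⟩)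
  · -- last use backward: x = a⁻¹, k ∈ listEval s l₁ n, m ∈ listEval t l₂ k
    rcases firstUse hs hnd hm hb with hb' | ⟨l₃, y, l₄, heq₂, hcase₂⟩
    · exact (hQ l₂ l₁ sub₂ sub₁).2.1 (mem_listEval_append.2 ⟨k, ht, hb'⟩)
    subst heq₂
    have sub₃ : l₃ <+ l₁ ++ x :: (l₃ ++ y :: l₄) :=
      (List.sublist_append_left _ _).trans sub₂
    rcases hcase₂ with ⟨hy, _, htop⟩ | ⟨hy, hb₄, _⟩
    · -- first use forward, the middle part l₃ satisfies m ∈ listEval t l₃ m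
      subst hx; subst hy
      rcases lastUse hs hm htop with hcl₃ | ⟨p, x', q, heq₃, hcase₃⟩
      · -- clean middle: m ∈ listEval s l₃ m
        have h₃ne : l₃ ≠ [] := by
          rintro rfl
          have : List.Chain' NC [((none : Option B), false), ((none : Option B), true)] :=
            hch.infix ⟨l₁, l₄, by simp⟩
          exact NC_false_true (List.isChain_cons_cons.1 this).1 rfl
        have hredp : ∀ c : List (B × Bool), l₃ ++ [] = c.map emb →
            FreeGroup.lift ρ (FreeGroup.mk c) ≠ 1 := by
          rw [List.append_nil]
          exact hred_of_chain hinj (hch.infix ⟨l₁ ++ [((none : Option B), false)],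
            ((none : Option B), true) :: l₄, by simp⟩) h₃ne
        refine (hQ l₃ [] sub₃ (List.nil_sublist _)).2.2 hredp ?_
        rw [List.append_nil]
        exact hcl₃
      · subst heq₃
        have subp : p <+ l₁ ++ ((none : Option B), false) ::
            ((p ++ x' :: q) ++ ((none : Option B), true) :: l₄) :=
          (List.sublist_append_left _ _).trans sub₃
        rcases hcase₃ with ⟨hx', _, hp⟩ | ⟨hx', _, hp⟩
        · -- m ∈ listEval s p m
          subst hx'
          have hpne : p ≠ [] := by
            rintro rfl
            have : List.Chain' NC
                [((none : Option B), false), ((none : Option B), true)] :=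
              hch.infix ⟨l₁, q ++ ((none : Option B), true) :: l₄, by simp⟩
            exact NC_false_true (List.isChain_cons_cons.1 this).1 rfl
          have hredp : ∀ c : List (B × Bool), p ++ [] = c.map emb →
              FreeGroup.lift ρ (FreeGroup.mk c) ≠ 1 := by
            rw [List.append_nil]
            refine hred_of_chain hinj (hch.infix ⟨l₁ ++ [((none : Option B), false)],
              ((none : Option B), true) :: q ++ ((none : Option B), true) :: l₄,
              by simp⟩) hpne
          refine (hQ p [] subp (List.nil_sublist _)).2.2 hredp ?_
          rw [List.append_nil]
          exact hp
        · -- m ∈ listEval s p n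
          have := (hQ p [] subp (List.nil_sublist _)).2.1
          rw [List.append_nil] at this
          exact this hp
    · exact (hQ l₄ l₁
        ((((List.sublist_cons_self y l₄).trans (List.sublist_append_right l₃ _))).trans sub₂)
        sub₁).2.1 (mem_listEval_append.2 ⟨k, ht, hb₄⟩)


theorem eventually_Q (hcof : IsCofinitaryGroup (FreeGroup.lift ρ).range)
    (hs : FinPartInj s) (u : List (Option B × Bool)) :
    ∀ᶠ m' in Filter.cofinite,
      (¬ (n ∈ listEval ρ s u m')) ∧ (¬ (m' ∈ listEval ρ s u n)) ∧
        ((∀ c : List (B × Bool), u = c.map emb → FreeGroup.lift ρ (FreeGroup.mk c) ≠ 1) →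
          ¬ (m' ∈ listEval ρ s u m')) := by
  refine Filter.Eventually.and ?_ (Filter.Eventually.and ?_ ?_)
  · refine Filter.eventually_cofinite.2
      (((segFinT (ρ := ρ) hs u {n} (Set.finite_singleton n)).subset ?_))
    intro m' h
    rw [Set.mem_setOf_eq, not_not] at h
    exact ⟨n, h, rfl⟩
  · refine Filter.eventually_cofinite.2
      (Set.Finite.subset (s := {m' | m' ∈ listEval ρ s u n})
        (Set.Subsingleton.finite (fun a ha b hb => Part.mem_unique ha hb)) (fun m' h => ?_))
    rw [Set.mem_setOf_eq, not_not] at h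
    exact h
  · by_cases hH : ∀ c : List (B × Bool), u = c.map emb →
        FreeGroup.lift ρ (FreeGroup.mk c) ≠ 1
    · refine Filter.eventually_cofinite.2 (Set.Finite.subset
        (segFinP (n := n) hcof hs u 1 (one_mem _) (fun c hc => by simpa using hH c hc)) ?_)
      intro m' h
      rw [Set.mem_setOf_eq, _root_.not_imp, not_not] at h
      exact ⟨m', h.2, Or.inr rfl⟩
    · exact Filter.Eventually.of_forall fun m' hc => (hH hc).elim

theorem fresh_eventually (hs : FinPartInj s) :
    ∀ᶠ m' in Filter.cofinite, Fresh s n m' := by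
  have h1 := hs.1.eventually_cofinite_notMem
  have h2 := (ran_finite hs.1).eventually_cofinite_notMem
  have h3 := Filter.eventually_cofinite_ne n
  filter_upwards [h1, h2, h3] with m' e1 e2 e3
  exact ⟨e1, e2, e3⟩

theorem mainWord (hinj : Function.Injective (FreeGroup.lift ρ))
    (hcof : IsCofinitaryGroup (FreeGroup.lift ρ).range)
    (hs : FinPartInj s) (hnd : n ∉ s.Dom)
    (w : FreeGroup (Option B)) (hw : IsGoodWord w) :
    ∀ᶠ m' in Filter.cofinite, ∀ k, k ∈ wordEval ρ (pfunExtend s n m') w k →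
      (wordEval ρ s w k).Dom := by
  classical
  set l := reducedWord w with hl
  have hall : ∀ᶠ m' in Filter.cofinite,
      ∀ pr ∈ (l.sublists.toFinset ×ˢ l.sublists.toFinset : Finset _),
        (¬ (n ∈ listEval ρ s (pr.1 ++ pr.2) m')) ∧
          (¬ (m' ∈ listEval ρ s (pr.1 ++ pr.2) n)) ∧
          ((∀ c : List (B × Bool), pr.1 ++ pr.2 = c.map emb →
              FreeGroup.lift ρ (FreeGroup.mk c) ≠ 1) →
            ¬ (m' ∈ listEval ρ s (pr.1 ++ pr.2) m')) :=
    (Filter.eventually_all_finset _).2 fun pr _ => eventually_Q hcof hs _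
  filter_upwards [hall, fresh_eventually hs] with m' hQ hfr
  intro k hk
  refine mainArg hinj hs hnd hfr (chain'_reducedWord w) (good_cyc hw) ?_ hk
  intro u₁ u₂ h1 h2
  exact hQ (u₁, u₂) (Finset.mem_product.2
    ⟨List.mem_toFinset.2 (List.mem_sublists.2 h1), List.mem_toFinset.2 (List.mem_sublists.2 h2)⟩)

end DomExt


/-- Domain Extension: if `ρ̂` is injective with cofinitary image, `(s,F)` is a condition,
`n ∉ dom s`, and `s*` is a finite set of bijections of `ℕ`, then for all but finitely many
`m`, `(s ∪ {(n,m)}, F)` is a condition extending `(s,F)` and `m ≠ f(n)` for all `f ∈ s*`. -/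
theorem domain_extension {B : Type*} (ρ : B → Equiv.Perm ℕ)
    (hinj : Function.Injective (FreeGroup.lift ρ))
    (hcof : IsCofinitaryGroup (FreeGroup.lift ρ).range)
    (s : ℕ →. ℕ) (F : Set (FreeGroup (Option B))) (hp : IsCondition (s, F))
    (n : ℕ) (hn : n ∉ s.Dom)
    (sstar : Set (Equiv.Perm ℕ)) (hstar : sstar.Finite) :
    ∀ᶠ m in Filter.cofinite,
      IsCondition (pfunExtend s n m, F) ∧ Extends ρ (pfunExtend s n m, F) (s, F) ∧
        ∀ f ∈ sstar, m ≠ f n := by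
  obtain ⟨hs, hF, hgood⟩ := hp
  have hmain : ∀ᶠ m in Filter.cofinite, ∀ w ∈ F, ∀ k : ℕ,
      k ∈ wordEval ρ (pfunExtend s n m) w k → (wordEval ρ s w k).Dom :=
    (Filter.eventually_all_finite hF).2 fun w hw =>
      DomExt.mainWord hinj hcof hs hn w (hgood w hw)
  have hstar' : ∀ᶠ m in Filter.cofinite, ∀ f ∈ sstar, m ≠ f n :=
    (Filter.eventually_all_finite hstar).2 fun f _ => Filter.eventually_cofinite_ne (f n)
  filter_upwards [hmain, hstar', DomExt.fresh_eventually hs] with m hmn hst hfr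
  refine ⟨⟨⟨?_, DomExt.pfunExtend_inj hs hfr⟩, hF, hgood⟩, ⟨?_, Set.Subset.refl F, hmn⟩, hst⟩
  · rw [DomExt.pfunExtend_dom]
    exact hs.1.insert n
  · intro k r hr
    refine DomExt.mem_pfunExtend.2 (Or.inr ⟨?_, hr⟩)
    rintro rfl
    exact hn (Part.dom_iff_mem.2 ⟨r, hr⟩)
end

section
/- (Range Extension) Let B be a set, a ∉ B, and let ρ : B → Perm(ℕ) be such that the induced homomorphism ρ̂ : FreeGroup(B) → Perm(ℕ) is injective and its image is a cofinitary group. Let (s,F) be a condition of Q_{{a},ρ}, let m ∈ ℕ with m ∉ ran(s), and let s* be a finite set of bijections from ℕ to ℕ. Then for all but finitely many n ∈ ℕ, the pair (s ∪ {(n,m)}, F) is a condition of Q_{{a},ρ} extending (s,F) and moreover f(n) ≠ m for every f ∈ s*. -/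
namespace RangeExtAux

open List

variable {B : Type*}

/-- generic reducedness relation over alphabet `α` -/
def RedRel' {α : Type*} : (α × Bool) → (α × Bool) → Prop :=
  fun p q => p.1 = q.1 → p.2 = q.2

lemma mem_listEval_cons {ρ : B → Equiv.Perm ℕ} {s : ℕ →. ℕ} {x : Option B × Bool}
    {u : List (Option B × Bool)} {p q : ℕ} :
    q ∈ listEval ρ s (x :: u) p ↔ ∃ r, r ∈ listEval ρ s u p ∧ q ∈ letterEval ρ s x r := by
  simp [listEval, PFun.comp_apply, Part.mem_bind_iff]
  exact Part.mem_bind_iff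

lemma mem_listEval_nil {ρ : B → Equiv.Perm ℕ} {s : ℕ →. ℕ} {p q : ℕ} :
    q ∈ listEval ρ s ([] : List (Option B × Bool)) p ↔ q = p := by
  simp [listEval, PFun.id]

lemma mem_listEval_append {ρ : B → Equiv.Perm ℕ} {s : ℕ →. ℕ}
    {A C : List (Option B × Bool)} {p q : ℕ} :
    q ∈ listEval ρ s (A ++ C) p ↔ ∃ r, r ∈ listEval ρ s C p ∧ q ∈ listEval ρ s A r := by
  induction A generalizing q with
  | nil => simp [mem_listEval_nil]
  | cons x u ih =>
      simp only [List.cons_append, mem_listEval_cons, ih]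
      constructor
      · rintro ⟨r, ⟨r', h1, h2⟩, h3⟩; exact ⟨r', h1, r, h2, h3⟩
      · rintro ⟨r', h1, r, h2, h3⟩; exact ⟨r, ⟨r', h1, h2⟩, h3⟩

lemma mem_pfunInv {s : ℕ →. ℕ} {p q : ℕ} :
    q ∈ pfunInv s p ↔ p ∈ s q ∧ ∀ y, p ∈ s y → y = q := by
  constructor
  · rintro ⟨h, rfl⟩
    exact ⟨h.choose_spec.1, fun y hy => (h.choose_spec.2 y hy)⟩
  · rintro ⟨h1, h2⟩
    have hu : ∃! y, p ∈ s y := ⟨q, h1, h2⟩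
    exact ⟨hu, h2 _ hu.choose_spec.1⟩

lemma mem_pfunExtend {s : ℕ →. ℕ} {n m p q : ℕ} :
    q ∈ pfunExtend s n m p ↔ (p = n ∧ q = m) ∨ (p ≠ n ∧ q ∈ s p) := by
  unfold pfunExtend
  by_cases h : p = n <;> simp [h, eq_comm]

section Inj

variable {ρ : B → Equiv.Perm ℕ} {s : ℕ →. ℕ}

lemma letterEval_inj (hs : ∀ ⦃n₁ n₂ m : ℕ⦄, m ∈ s n₁ → m ∈ s n₂ → n₁ = n₂)
    {x : Option B × Bool} {p₁ p₂ q : ℕ}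
    (h1 : q ∈ letterEval ρ s x p₁) (h2 : q ∈ letterEval ρ s x p₂) : p₁ = p₂ := by
  obtain ⟨b | b, ε⟩ := x
  · cases ε
    · simp only [letterEval] at h1 h2
      rw [mem_pfunInv] at h1 h2
      exact Part.mem_unique h1.1 h2.1
    · simp only [letterEval] at h1 h2
      exact hs h1 h2
  · cases ε
    · simp only [letterEval, PFun.coe_val, Part.mem_some_iff] at h1 h2
      exact (ρ b).symm.injective (h1.symm.trans h2)
    · simp only [letterEval, PFun.coe_val, Part.mem_some_iff] at h1 h2
      exact (ρ b).injective (h1.symm.trans h2)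

lemma listEval_inj (hs : ∀ ⦃n₁ n₂ m : ℕ⦄, m ∈ s n₁ → m ∈ s n₂ → n₁ = n₂)
    {v : List (Option B × Bool)} {p₁ p₂ q : ℕ}
    (h1 : q ∈ listEval ρ s v p₁) (h2 : q ∈ listEval ρ s v p₂) : p₁ = p₂ := by
  induction v generalizing q with
  | nil => rw [mem_listEval_nil] at h1 h2; omega
  | cons x u ih =>
      rw [mem_listEval_cons] at h1 h2
      obtain ⟨r₁, hr₁, hq₁⟩ := h1
      obtain ⟨r₂, hr₂, hq₂⟩ := h2
      obtain rfl : r₁ = r₂ := letterEval_inj hs hq₁ hq₂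
      exact ih hr₁ hr₂

lemma ran_finite (hs : FinPartInj s) : s.ran.Finite := by
  have : s.ran ⊆ ⋃ a ∈ s.Dom, {b | b ∈ s a} := by
    rintro b ⟨a, hab⟩
    exact Set.mem_biUnion (PFun.mem_dom s a |>.2 ⟨b, hab⟩) hab
  refine Set.Finite.subset (Set.Finite.biUnion hs.1 fun a _ => ?_) this
  exact Set.Subsingleton.finite fun x hx y hy => Part.mem_unique hx hy

lemma dom_listEval_finite (hs : FinPartInj s) :
    ∀ {v : List (Option B × Bool)}, (∃ x ∈ v, x.1 = (none : Option B)) →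
      {j : ℕ | (listEval ρ s v j).Dom}.Finite := by
  intro v
  induction v with
  | nil => rintro ⟨x, hx, -⟩; cases hx
  | cons x u ih =>
      rintro ⟨y, hy, hy1⟩
      by_cases hu : ∃ x ∈ u, x.1 = (none : Option B)
      · refine Set.Finite.subset (ih hu) ?_
        intro j hj
        rw [Set.mem_setOf_eq, Part.dom_iff_mem] at hj ⊢
        obtain ⟨q, hq⟩ := hj
        rw [mem_listEval_cons] at hq
        obtain ⟨r, hr, -⟩ := hq
        exact ⟨r, hr⟩
      · have hx1 : x.1 = (none : Option B) := by
          rcases List.mem_cons.1 hy with rfl | h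
          · exact hy1
          · exact absurd ⟨y, h, hy1⟩ hu
        -- the letter x has finite domain
        have hD : {r : ℕ | (letterEval ρ s x r).Dom}.Finite := by
          obtain ⟨x1, ε⟩ := x
          cases hx1
          cases ε
          · refine Set.Finite.subset (ran_finite hs) ?_
            rintro r ⟨q, hq, -⟩
            exact ⟨q, hq⟩
          · exact hs.1
        have hsub : {j : ℕ | (listEval ρ s (x :: u) j).Dom} ⊆
            ⋃ r ∈ {r : ℕ | (letterEval ρ s x r).Dom}, {j : ℕ | r ∈ listEval ρ s u j} := by
          intro j hj
          rw [Set.mem_setOf_eq, Part.dom_iff_mem] at hj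
          obtain ⟨q, hq⟩ := hj
          rw [mem_listEval_cons] at hq
          obtain ⟨r, hr, hq⟩ := hq
          exact Set.mem_biUnion (Part.dom_iff_mem.2 ⟨q, hq⟩) hr
        refine Set.Finite.subset (Set.Finite.biUnion hD fun r _ => ?_) hsub
        exact Set.Subsingleton.finite fun j₁ h₁ j₂ h₂ => listEval_inj hs.2 h₁ h₂

end Inj

section Extend

variable {ρ : B → Equiv.Perm ℕ} {s : ℕ →. ℕ} {n m : ℕ}

lemma letterEval_mono (hs : FinPartInj s) (hn : n ∉ s.Dom) (hm : m ∉ s.ran)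
    {x : Option B × Bool} {p q : ℕ} (h : q ∈ letterEval ρ s x p) :
    q ∈ letterEval ρ (pfunExtend s n m) x p := by
  obtain ⟨b | b, ε⟩ := x
  · cases ε
    · simp only [letterEval] at h ⊢
      rw [mem_pfunInv] at h ⊢
      obtain ⟨h1, h2⟩ := h
      have hqn : q ≠ n := fun hq => hn (PFun.mem_dom s n |>.2 ⟨p, hq ▸ h1⟩)
      refine ⟨mem_pfunExtend.2 (Or.inr ⟨hqn, h1⟩), fun y hy => ?_⟩
      rcases mem_pfunExtend.1 hy with ⟨rfl, rfl⟩ | ⟨-, hy⟩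
      · exact absurd ⟨q, h1⟩ hm
      · exact h2 y hy
    · simp only [letterEval] at h ⊢
      have hpn : p ≠ n := fun hp => hn (PFun.mem_dom s n |>.2 ⟨q, hp ▸ h⟩)
      exact mem_pfunExtend.2 (Or.inr ⟨hpn, h⟩)
  · cases ε <;> exact h

lemma listEval_mono (hs : FinPartInj s) (hn : n ∉ s.Dom) (hm : m ∉ s.ran)
    {v : List (Option B × Bool)} {p q : ℕ} (h : q ∈ listEval ρ s v p) :
    q ∈ listEval ρ (pfunExtend s n m) v p := by
  induction v generalizing q with
  | nil => rwa [mem_listEval_nil] at h ⊢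
  | cons x u ih =>
      rw [mem_listEval_cons] at h ⊢
      obtain ⟨r, hr, hq⟩ := h
      exact ⟨r, ih hr, letterEval_mono hs hn hm hq⟩

/-- If the `s`-evaluation is defined, the `t`-evaluation agrees with it. -/
lemma listEval_eq_of_dom (hs : FinPartInj s) (hn : n ∉ s.Dom) (hm : m ∉ s.ran)
    {v : List (Option B × Bool)} {p q : ℕ}
    (hdom : (listEval ρ s v p).Dom) (h : q ∈ listEval ρ (pfunExtend s n m) v p) :
    q ∈ listEval ρ s v p := by
  obtain ⟨r, hr⟩ := Part.dom_iff_mem.1 hdom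
  obtain rfl : r = q := Part.mem_unique (listEval_mono hs hn hm hr) h
  exact hr

/-- A step of the extended function that is not a step of `s` must use the new pair. -/
lemma step_new (hs : FinPartInj s) (hn : n ∉ s.Dom) (hm : m ∉ s.ran) (hnm : n ≠ m)
    {x : Option B × Bool} {p q : ℕ}
    (h : q ∈ letterEval ρ (pfunExtend s n m) x p) (hnd : ¬(letterEval ρ s x p).Dom) :
    (x = (none, true) ∧ p = n ∧ q = m) ∨ (x = (none, false) ∧ p = m ∧ q = n) := by
  obtain ⟨b | b, ε⟩ := x
  · cases ε
    · -- inverse letter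
      simp only [letterEval] at h hnd
      rw [mem_pfunInv] at h
      obtain ⟨h1, h2⟩ := h
      rcases mem_pfunExtend.1 h1 with ⟨rfl, rfl⟩ | ⟨hq, h1⟩
      · exact Or.inr ⟨rfl, rfl, rfl⟩
      · exfalso
        apply hnd
        exact ⟨q, h1, fun y hy => hs.2 hy h1⟩
    · simp only [letterEval] at h hnd
      rcases mem_pfunExtend.1 h with ⟨rfl, rfl⟩ | ⟨hp, h1⟩
      · exact Or.inl ⟨rfl, rfl, rfl⟩
      · exact absurd (Part.dom_iff_mem.2 ⟨q, h1⟩) hnd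
  · exfalso
    cases ε <;> exact hnd trivial

/-- First-use decomposition: if the `t = s ∪ {(n,m)}` evaluation of `L` at `p` is defined
but the `s`-evaluation is not, then `L` splits at the first (right-most) use of the new
pair. -/
lemma first_use (hs : FinPartInj s) (hn : n ∉ s.Dom) (hm : m ∉ s.ran) (hnm : n ≠ m) :
    ∀ {L : List (Option B × Bool)} {p q : ℕ},
      q ∈ listEval ρ (pfunExtend s n m) L p → ¬(listEval ρ s L p).Dom →
      ∃ (L₁ L₂ : List (Option B × Bool)) (ε : Bool), L = L₁ ++ (none, ε) :: L₂ ∧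
        (if ε then n else m) ∈ listEval ρ s L₂ p ∧
        q ∈ listEval ρ (pfunExtend s n m) L₁ (if ε then m else n) := by
  intro L
  induction L with
  | nil =>
      intro p q h hnd
      rw [mem_listEval_nil] at h
      exact absurd trivial hnd
  | cons x u ih =>
      intro p q h hnd
      rw [mem_listEval_cons] at h
      obtain ⟨r, hr, hq⟩ := h
      by_cases hdu : (listEval ρ s u p).Dom
      · -- the new pair is used at the letter x itself
        have hrs : r ∈ listEval ρ s u p := listEval_eq_of_dom hs hn hm hdu hr
        have hnl : ¬(letterEval ρ s x r).Dom := by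
          intro hd
          apply hnd
          obtain ⟨q', hq'⟩ := Part.dom_iff_mem.1 hd
          exact Part.dom_iff_mem.2 ⟨q', mem_listEval_cons.2 ⟨r, hrs, hq'⟩⟩
        rcases step_new hs hn hm hnm hq hnl with ⟨rfl, rfl, rfl⟩ | ⟨rfl, rfl, rfl⟩
        · exact ⟨[], u, true, rfl, by simpa using hrs, mem_listEval_nil.2 rfl⟩
        · exact ⟨[], u, false, rfl, by simpa using hrs, mem_listEval_nil.2 rfl⟩
      · obtain ⟨L₁, L₂, ε, rfl, h1, h2⟩ := ih hr hdu
        refine ⟨x :: L₁, L₂, ε, rfl, h1, ?_⟩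
        exact mem_listEval_cons.2 ⟨r, h2, hq⟩

end Extend

section Reduced

lemma exists_split_of_not_chain' {α : Type*} {R : α → α → Prop} :
    ∀ {L : List α}, ¬ List.Chain' R L →
      ∃ (A : List α) (p q : α) (C : List α), L = A ++ p :: q :: C ∧ ¬ R p q := by
  intro L
  induction L with
  | nil => intro h; exact absurd List.isChain_nil h
  | cons p tl ih =>
      intro h
      match tl, h with
      | [], h => exact absurd (List.isChain_singleton p) h
      | q :: tl', h =>
          unfold List.Chain' at h
          rw [List.isChain_cons_cons] at h
          push_neg at h
          by_cases hpq : R p q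
          · obtain ⟨A, p', q', C, hEq, hR⟩ := ih (h hpq)
            exact ⟨p :: A, p', q', C, by rw [hEq]; rfl, hR⟩
          · exact ⟨[], p, q, q :: tl' |>.tail, by simp, hpq⟩

lemma chain'_of_reduce {α : Type*} [DecidableEq α] {L : List (α × Bool)}
    (h : FreeGroup.reduce L = L) : List.Chain' RedRel' L := by
  by_contra hc
  obtain ⟨A, p, q, C, hEq, hR⟩ := exists_split_of_not_chain' hc
  unfold RedRel' at hR
  push_neg at hR
  obtain ⟨h1, h2⟩ := hR
  have hq : q = (p.1, !p.2) := by
    obtain ⟨q1, q2⟩ := q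
    obtain ⟨p1, p2⟩ := p
    simp only [Prod.mk.injEq] at h1 ⊢
    simp only at h1 h2
    subst h1
    cases p2 <;> cases q2 <;> simp_all
  rw [hq] at hEq
  obtain ⟨p1, p2⟩ := p
  exact FreeGroup.reduce.not (by rw [h, hEq])

lemma reduce_eq_self_of_chain' {α : Type*} [DecidableEq α] :
    ∀ {L : List (α × Bool)}, List.Chain' RedRel' L → FreeGroup.reduce L = L := by
  intro L
  induction L with
  | nil => intro _; rfl
  | cons x u ih =>
      intro h
      have hu : FreeGroup.reduce u = u := ih h.tail
      rw [FreeGroup.reduce.cons, hu]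
      cases u with
      | nil => rfl
      | cons hd tl =>
          have hR : RedRel' x hd := List.isChain_cons_cons.1 h |>.1
          have : ¬(x.1 = hd.1 ∧ x.2 = !hd.2) := by
            rintro ⟨ha, hb⟩
            rw [hR ha] at hb
            exact (Bool.not_ne_self hd.2) hb.symm
          simp [this]

end Reduced

section AllSome

variable {ρ : B → Equiv.Perm ℕ} {s : ℕ →. ℕ}

/-- In a reduced word all whose letters involve the same generator, all signs agree. -/
lemma sign_const {α : Type*} {b : α} :
    ∀ {L : List (α × Bool)}, List.Chain' RedRel' L → (∀ x ∈ L, x.1 = b) →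
      ∀ x ∈ L, ∀ y ∈ L, x.2 = y.2 := by
  intro L
  induction L with
  | nil => intro _ _ x hx; cases hx
  | cons p tl ih =>
      intro hch hall x hx y hy
      have hhd : ∀ z ∈ tl, z.2 = p.2 := by
        intro z hz
        induction tl with
        | nil => cases hz
        | cons q tl' ih' =>
            have hRq : RedRel' p q := List.isChain_cons_cons.1 hch |>.1
            have hq2 : q.2 = p.2 :=
              (hRq ((hall p (by simp)).trans (hall q (by simp)).symm)).symm
            rcases List.mem_cons.1 hz with rfl | hz'
            · exact hq2
            · have := ih (hch.tail) (fun x hx => hall x (List.mem_cons_of_mem p hx))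
                z (List.mem_cons_of_mem q hz') q List.mem_cons_self
              exact this.trans hq2
      rcases List.mem_cons.1 hx with rfl | hx' <;> rcases List.mem_cons.1 hy with rfl | hy'
      · rfl
      · exact (hhd y hy').symm
      · exact hhd x hx'
      · exact (hhd x hx').trans (hhd y hy').symm

lemma lift_mk_single {b : B} (ε : Bool) :
    (FreeGroup.lift ρ) (FreeGroup.mk [(b, ε)]) = if ε then ρ b else (ρ b)⁻¹ := by
  cases ε
  · have h1 : FreeGroup.mk [(b, false)] = (FreeGroup.of b)⁻¹ := by
      rw [show (FreeGroup.of b : FreeGroup B) = FreeGroup.mk [(b, true)] from rfl,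
        FreeGroup.inv_mk]
      simp [FreeGroup.invRev]
    rw [h1, map_inv, FreeGroup.lift_apply_of]
    rfl
  · rw [show (FreeGroup.mk [(b, true)] : FreeGroup B) = FreeGroup.of b from rfl,
      FreeGroup.lift_apply_of]
    rfl

/-- Evaluation of an all-`B` word is the total permutation given by the free group element. -/
lemma listEval_allSome :
    ∀ (v' : List (B × Bool)) (p q : ℕ),
      q ∈ listEval ρ s (v'.map (fun y => ((some y.1 : Option B), y.2))) p ↔
        q = (FreeGroup.lift ρ) (FreeGroup.mk v') p := by
  intro v'
  induction v' with
  | nil =>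
      intro p q
      rw [List.map_nil, mem_listEval_nil]
      have h1 : FreeGroup.mk ([] : List (B × Bool)) = 1 := rfl
      simp [h1]
  | cons y u ih =>
      intro p q
      obtain ⟨b, ε⟩ := y
      have hmk : FreeGroup.mk (((b, ε)) :: u) = FreeGroup.mk [(b, ε)] * FreeGroup.mk u := by
        rw [FreeGroup.mul_mk]; rfl
      have hlet : ∀ r q' : ℕ, q' ∈ letterEval ρ s ((some b : Option B), ε) r ↔
          q' = (if ε then ρ b else (ρ b)⁻¹) r := by
        intro r q'
        cases ε
        · simp only [letterEval, PFun.coe_val, Part.mem_some_iff, if_false]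
          rfl
        · simp only [letterEval, PFun.coe_val, Part.mem_some_iff, if_true]
      rw [List.map_cons, mem_listEval_cons]
      constructor
      · rintro ⟨r, hr, hq⟩
        rw [ih] at hr
        subst hr
        rw [hlet] at hq
        subst hq
        rw [hmk, map_mul, Equiv.Perm.mul_apply, lift_mk_single]
      · intro hq
        refine ⟨(FreeGroup.lift ρ) (FreeGroup.mk u) p, (ih p _).2 rfl, ?_⟩
        rw [hlet, ← lift_mk_single (ρ := ρ), ← Equiv.Perm.mul_apply, ← map_mul, ← hmk, hq]

/-- every all-`some` word comes from a word on `B`. -/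
lemma exists_allSome :
    ∀ {v : List (Option B × Bool)}, (∀ x ∈ v, x.1 ≠ (none : Option B)) →
      ∃ v' : List (B × Bool), v = v'.map (fun y => ((some y.1 : Option B), y.2)) := by
  intro v
  induction v with
  | nil => exact fun _ => ⟨[], rfl⟩
  | cons x u ih =>
      intro h
      obtain ⟨u', hu⟩ := ih fun y hy => h y (List.mem_cons_of_mem x hy)
      obtain ⟨b | b, ε⟩ := x
      · exact absurd rfl (h _ List.mem_cons_self)
      · exact ⟨(b, ε) :: u', by rw [hu]; rfl⟩

end AllSome

section Sets

variable (ρ : B → Equiv.Perm ℕ) (s : ℕ →. ℕ) (m : ℕ)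

/-- The obstruction set of a word `v`: its fixed points, the preimage of `m` and
the image of `m`. -/
def XSet (v : List (Option B × Bool)) : Set ℕ :=
  {j | j ∈ listEval ρ s v j} ∪ {j | m ∈ listEval ρ s v j} ∪ {j | j ∈ listEval ρ s v m}

/-- The relevant family of subwords of `L0`: nonempty reduced words that are either an infix
of `L0` or a concatenation of a suffix and a prefix of `L0`. -/
def GFam (L0 : List (Option B × Bool)) : Set (List (Option B × Bool)) :=
  {v | v ≠ [] ∧ List.Chain' RedRel' v ∧
    (v <:+: L0 ∨ ∃ L₁ L₂, v = L₂ ++ L₁ ∧ L₁ <+: L0 ∧ L₂ <:+ L0)}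

def NSet (L0 : List (Option B × Bool)) : Set ℕ :=
  ⋃ v ∈ GFam L0, XSet ρ s m v

variable {ρ s m}

lemma GFam_finite (L0 : List (Option B × Bool)) : (GFam L0).Finite := by
  have hS : {v : List (Option B × Bool) | v.Sublist L0}.Finite := by
    refine Set.Finite.subset (L0.sublists.finite_toSet) ?_
    intro v hv
    exact List.mem_sublists.2 hv
  refine Set.Finite.subset (Set.Finite.image2 (· ++ ·) hS hS) ?_
  rintro v ⟨-, -, hv | ⟨L₁, L₂, rfl, h1, h2⟩⟩
  · exact ⟨v, hv.sublist, [], List.nil_sublist L0, by simp⟩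
  · exact ⟨L₂, h2.sublist, L₁, h1.sublist, rfl⟩

lemma XSet_finite (hinj : Function.Injective (FreeGroup.lift ρ))
    (hcof : IsCofinitaryGroup (FreeGroup.lift ρ).range)
    (hs : FinPartInj s) {v : List (Option B × Bool)}
    (hne : v ≠ []) (hred : List.Chain' RedRel' v) : (XSet ρ s m v).Finite := by
  refine Set.Finite.union (Set.Finite.union ?_ ?_) ?_
  · -- fixed points
    by_cases hb : ∃ x ∈ v, x.1 = (none : Option B)
    · refine Set.Finite.subset (dom_listEval_finite (ρ := ρ) hs hb) ?_
      intro j hj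
      exact Part.dom_iff_mem.2 ⟨j, hj⟩
    · push_neg at hb
      obtain ⟨v', rfl⟩ := exists_allSome hb
      classical
      set g := (FreeGroup.lift ρ) (FreeGroup.mk v') with hg
      have hset : {j : ℕ | j ∈ listEval ρ s (v'.map (fun y => ((some y.1 : Option B), y.2))) j}
          = {j : ℕ | g j = j} := by
        ext j
        rw [Set.mem_setOf_eq, listEval_allSome, Set.mem_setOf_eq, ← hg, eq_comm]
      rw [hset]
      have hgne : g ≠ 1 := by
        intro hg1
        have : FreeGroup.mk v' = 1 := hinj (by rw [map_one, ← hg, hg1])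
        have h2 : (FreeGroup.mk v').toWord = [] := by rw [this, FreeGroup.toWord_one]
        rw [FreeGroup.toWord_mk] at h2
        have hred' : List.Chain' RedRel' v' := by
          unfold List.Chain' at hred ⊢
          rw [List.isChain_map] at hred
          exact hred.imp fun a b h hab => h (by rw [hab])
        rw [reduce_eq_self_of_chain' hred'] at h2
        apply hne
        rw [h2]
        rfl
      exact hcof g ⟨FreeGroup.mk v', rfl⟩ hgne
  · exact Set.Subsingleton.finite fun x hx y hy => listEval_inj hs.2 hx hy
  · exact Set.Subsingleton.finite fun x hx y hy => Part.mem_unique hx hy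

lemma NSet_finite (hinj : Function.Injective (FreeGroup.lift ρ))
    (hcof : IsCofinitaryGroup (FreeGroup.lift ρ).range)
    (hs : FinPartInj s) (L0 : List (Option B × Bool)) : (NSet ρ s m L0).Finite :=
  Set.Finite.biUnion (GFam_finite L0) fun _ hv => XSet_finite hinj hcof hs hv.1 hv.2.1

end Sets

section Core

variable {ρ : B → Equiv.Perm ℕ} {s : ℕ →. ℕ} {n m : ℕ} {L0 : List (Option B × Bool)}

/-- wrap-around contradiction -/
lemma wrap_contra (hnm : n ≠ m)
    (hred : List.Chain' RedRel' L0)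
    (hjct : ∀ x y : Option B × Bool, L0.getLast? = some x → L0.head? = some y → RedRel' x y)
    (hnN : n ∉ NSet ρ s m L0)
    {L₁ Lxx L₂w rest : List (Option B × Bool)} {εp ε₁ : Bool} {k : ℕ}
    (hsuf : L0 = Lxx ++ (none, ε₁) :: L₂w)
    (hpre : L0 = L₁ ++ (none, εp) :: rest)
    (hin1 : (if ε₁ then n else m) ∈ listEval ρ s L₂w k)
    (hks : k ∈ listEval ρ s L₁ (if εp then m else n))
    (hturn : εp = true → ε₁ = true) : False := by
  have hcomp : (if ε₁ then n else m) ∈ listEval ρ s (L₂w ++ L₁) (if εp then m else n) :=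
    mem_listEval_append.2 ⟨k, hks, hin1⟩
  have hsufx : L₂w <:+ L0 := ⟨Lxx ++ [(none, ε₁)], by rw [hsuf]; simp⟩
  have hprex : L₁ <+: L0 := ⟨(none, εp) :: rest, hpre.symm⟩
  by_cases hv : L₂w ++ L₁ = []
  · obtain ⟨h2, h1⟩ := List.append_eq_nil_iff.1 hv
    subst h2; subst h1
    rw [mem_listEval_nil] at hin1 hks
    have heq : (if ε₁ then n else m) = (if εp then m else n) := hin1.trans hks
    cases εp <;> cases ε₁
    · exact hnm heq.symm
    · -- εp = false, ε₁ = true : structural contradiction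
      have hlast : L0.getLast? = some ((none : Option B), true) := by
        rw [hsuf, List.getLast?_append_of_ne_nil _ (by simp)]
        rfl
      have hhead : L0.head? = some ((none : Option B), false) := by
        rw [hpre]; rfl
      exact Bool.noConfusion (hjct _ _ hlast hhead rfl)
    · exact Bool.false_ne_true (hturn rfl)
    · exact hnm heq
  · have hGF : L₂w ++ L₁ ∈ GFam L0 := by
      refine ⟨hv, ?_, Or.inr ⟨L₁, L₂w, rfl, hprex, hsufx⟩⟩
      unfold List.Chain'
      rw [List.isChain_append]
      refine ⟨hred.suffix hsufx, hred.prefix hprex, ?_⟩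
      intro x hx y hy
      have h2ne : L₂w ≠ [] := by rintro rfl; cases hx
      have h1ne : L₁ ≠ [] := by rintro rfl; cases hy
      apply hjct
      · rw [hsuf,
          show (Lxx ++ (none, ε₁) :: L₂w : List (Option B × Bool))
            = (Lxx ++ [(none, ε₁)]) ++ L₂w by simp,
          List.getLast?_append_of_ne_nil _ h2ne]
        exact hx
      · rw [hpre, List.head?_append_of_ne_nil _ h1ne]
        exact hy
    apply hnN
    apply Set.mem_biUnion hGF
    cases εp <;> cases ε₁
    · exact Or.inl (Or.inr hcomp)
    · exact Or.inl (Or.inl hcomp)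
    · exact (Bool.false_ne_true (hturn rfl)).elim
    · exact Or.inr hcomp

/-- mid-pair contradiction -/
lemma mid_contra (hnm : n ≠ m)
    (hred : List.Chain' RedRel' L0)
    (hnN : n ∉ NSet ρ s m L0)
    {L₁' L₂' rest : List (Option B × Bool)} {εp ε' : Bool}
    (hsplit : L0 = L₁' ++ (none, ε') :: (L₂' ++ (none, εp) :: rest))
    (hin' : (if ε' then n else m) ∈ listEval ρ s L₂' (if εp then m else n))
    (hnot : ¬(εp = true ∧ ε' = false)) : False := by
  by_cases hv : L₂' = []
  · subst hv
    rw [mem_listEval_nil] at hin'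
    have hadj : RedRel' ((none : Option B), ε') ((none : Option B), εp) := by
      have hinf : [((none : Option B), ε'), (none, εp)] <:+: L0 :=
        ⟨L₁', rest, by rw [hsplit]; simp⟩
      exact (List.isChain_cons_cons.1 (hred.infix hinf)).1
    cases εp <;> cases ε'
    · exact hnm hin'.symm
    · exact Bool.noConfusion (hadj rfl)
    · exact hnot ⟨rfl, rfl⟩
    · exact hnm hin'
  · have hGF : L₂' ∈ GFam L0 := by
      refine ⟨hv, hred.infix ⟨L₁' ++ [((none : Option B), ε')], (none, εp) :: rest,
        by rw [hsplit]; simp⟩, Or.inl ⟨L₁' ++ [((none : Option B), ε')], (none, εp) :: rest,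
        by rw [hsplit]; simp⟩⟩
    apply hnN
    apply Set.mem_biUnion hGF
    cases εp <;> cases ε'
    · exact Or.inl (Or.inr hin')
    · exact Or.inl (Or.inl hin')
    · exact (hnot ⟨rfl, rfl⟩).elim
    · exact Or.inr hin'

end Core

section PerWord

variable {ρ : B → Equiv.Perm ℕ} {s : ℕ →. ℕ} {n m : ℕ}

lemma per_word (hs : FinPartInj s) (hn : n ∉ s.Dom) (hm : m ∉ s.ran) (hnm : n ≠ m)
    {w : FreeGroup (Option B)} (hw : IsGoodWord w)
    (hnN : n ∉ NSet ρ s m (reducedWord w)) :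
    ∀ k, k ∈ wordEval ρ (pfunExtend s n m) w k → (wordEval ρ s w k).Dom := by
  intro k hk
  by_contra hnd
  set L0 := reducedWord w with hL0
  letI : DecidableEq (Option B) := Classical.decEq _
  have hfix : FreeGroup.reduce L0 = L0 := FreeGroup.reduce_toWord w
  have hred : List.Chain' RedRel' L0 := chain'_of_reduce hfix
  have hjct : ∀ x y : Option B × Bool, L0.getLast? = some x → L0.head? = some y →
      RedRel' x y := by
    rcases hw.2 with ⟨b, hb⟩ | hdist
    · intro x y hx hy _
      exact sign_const hred hb x (List.mem_of_getLast? hx) y (List.mem_of_mem_head? hy)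
    · intro x y hx hy h1
      exact absurd h1.symm (hdist y x hy hx)
  have hk' : k ∈ listEval ρ (pfunExtend s n m) L0 k := hk
  have hnd' : ¬(listEval ρ s L0 k).Dom := hnd
  obtain ⟨L₁, L₂w, ε₁, hsp1, hin1, hk1⟩ := first_use hs hn hm hnm hk' hnd'
  by_cases hdom1 : (listEval ρ s L₁ (if ε₁ then m else n)).Dom
  · exact wrap_contra hnm hred hjct hnN hsp1 hsp1 hin1
      (listEval_eq_of_dom hs hn hm hdom1 hk1) (fun h => h)
  · obtain ⟨L₁', L₂', ε₂, hsp2, hin2, hk2⟩ := first_use hs hn hm hnm hk1 hdom1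
    have hsplit : L0 = L₁' ++ (none, ε₂) :: (L₂' ++ (none, ε₁) :: L₂w) := by
      rw [hsp1, hsp2]; simp
    by_cases hcase : ε₁ = true ∧ ε₂ = false
    · obtain ⟨he1, he2⟩ := hcase
      subst he1; subst he2
      by_cases hdom2 : (listEval ρ s L₁' (if false then m else n)).Dom
      · exact wrap_contra hnm hred hjct hnN hsp1 hsplit hin1
          (listEval_eq_of_dom hs hn hm hdom2 hk2) (fun h => Bool.noConfusion h)
      · obtain ⟨L₁'', L₂'', ε₃, hsp3, hin3, hk3⟩ := first_use hs hn hm hnm hk2 hdom2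
        have hsplit3 : L0 = L₁'' ++ (none, ε₃) ::
            (L₂'' ++ (none, false) :: (L₂' ++ (none, true) :: L₂w)) := by
          rw [hsplit, hsp3]; simp
        exact mid_contra hnm hred hnN hsplit3 hin3 (by rintro ⟨h, -⟩; exact Bool.noConfusion h)
    · exact mid_contra hnm hred hnN hsplit hin2 (by rintro ⟨h1, h2⟩; exact hcase ⟨h1, h2⟩)

end PerWord

end RangeExtAux

/-- Range Extension: if `ρ̂` is injective with cofinitary image, `(s,F)` is a condition,
`m ∉ ran s`, and `s*` is a finite set of bijections of `ℕ`, then for all but finitely many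
`n`, `(s ∪ {(n,m)}, F)` is a condition extending `(s,F)` and `f(n) ≠ m` for all `f ∈ s*`. -/
theorem range_extension {B : Type*} (ρ : B → Equiv.Perm ℕ)
    (hinj : Function.Injective (FreeGroup.lift ρ))
    (hcof : IsCofinitaryGroup (FreeGroup.lift ρ).range)
    (s : ℕ →. ℕ) (F : Set (FreeGroup (Option B))) (hp : IsCondition (s, F))
    (m : ℕ) (hm : m ∉ s.ran)
    (sstar : Set (Equiv.Perm ℕ)) (hstar : sstar.Finite) :
    ∀ᶠ n in Filter.cofinite,
      IsCondition (pfunExtend s n m, F) ∧ Extends ρ (pfunExtend s n m, F) (s, F) ∧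
        ∀ f ∈ sstar, f n ≠ m := by
  classical
  set bigN : Set ℕ :=
    ((s.Dom ∪ {m}) ∪ ((fun f : Equiv.Perm ℕ => f⁻¹ m) '' sstar)) ∪
      ⋃ w ∈ F, RangeExtAux.NSet ρ s m (reducedWord w) with hbigN
  have hfin : bigN.Finite := by
    refine Set.Finite.union (Set.Finite.union (Set.Finite.union hp.1.1
      (Set.finite_singleton m)) (hstar.image _)) ?_
    exact Set.Finite.biUnion hp.2.1 fun w _ =>
      RangeExtAux.NSet_finite hinj hcof hp.1 (reducedWord w)
  rw [Filter.eventually_cofinite]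
  refine Set.Finite.subset hfin ?_
  intro x hx
  simp only [Set.mem_setOf_eq] at hx
  by_contra hxB
  apply hx
  have hxdom : x ∉ s.Dom := fun h => hxB (Or.inl (Or.inl (Or.inl h)))
  have hxm : x ≠ m := fun h => hxB (Or.inl (Or.inl (Or.inr h)))
  have hximg : x ∉ (fun f : Equiv.Perm ℕ => f⁻¹ m) '' sstar :=
    fun h => hxB (Or.inl (Or.inr h))
  have hxN : ∀ w ∈ F, x ∉ RangeExtAux.NSet ρ s m (reducedWord w) :=
    fun w hw h => hxB (Or.inr (Set.mem_biUnion hw h))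
  refine ⟨⟨⟨?_, ?_⟩, hp.2.1, hp.2.2⟩, ⟨?_, fun _ h => h, ?_⟩, ?_⟩
  · -- domain finite
    refine Set.Finite.subset (hp.1.1.insert x) ?_
    intro k hk
    by_cases hkx : k = x
    · exact Or.inl hkx
    · refine Or.inr ?_
      have : (pfunExtend s x m k).Dom := hk
      unfold pfunExtend at this
      rw [if_neg hkx] at this
      exact this
  · -- injectivity
    intro n₁ n₂ q h1 h2
    rcases RangeExtAux.mem_pfunExtend.1 h1 with ⟨rfl, rfl⟩ | ⟨hne1, h1'⟩ <;>
      rcases RangeExtAux.mem_pfunExtend.1 h2 with ⟨rfl, h2'⟩ | ⟨hne2, h2'⟩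
    · rfl
    · exact absurd ⟨n₂, h2'⟩ hm
    · exact absurd ⟨n₁, h2' ▸ h1'⟩ hm
    · exact hp.1.2 h1' h2'
  · -- graph extension
    intro a b hb
    have ha : a ≠ x := fun h => hxdom (h ▸ (PFun.mem_dom s a).2 ⟨b, hb⟩)
    exact RangeExtAux.mem_pfunExtend.2 (Or.inr ⟨ha, hb⟩)
  · -- the key condition
    intro w hw k hk
    exact RangeExtAux.per_word hp.1 hxdom hm hxm (hp.2.2 w hw) (hxN w hw) k hk
  · -- avoiding the bijections
    intro f hf heq
    exact hximg ⟨f, hf, by simp only [← heq]; exact f.symm_apply_apply x⟩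
end

section
/- (Generic Hitting, density form) Let B be a set, a ∉ B, ρ : B → Perm(ℕ), and h ∈ Perm(ℕ). Suppose that the homomorphism from FreeGroup({a} ∪ B) to Perm(ℕ) determined by a ↦ h and b ↦ ρ(b) is injective and has cofinitary image. Let s* be a finite set of bijections from ℕ to ℕ such that the set {n ∈ ℕ : h(n) ≠ f(n) for all f ∈ s*} is infinite. Then for every condition (s,F) of Q_{{a},ρ} and every N ∈ ℕ, there exists n ≥ N with n ∉ dom(s) such that h(n) ≠ f(n) for all f ∈ s* and (s ∪ {(n, h(n))}, F) is a condition of Q_{{a},ρ} extending (s,F). -/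
lemma mem_pfunInv {s : ℕ →. ℕ} (hs : ∀ ⦃n₁ n₂ m : ℕ⦄, m ∈ s n₁ → m ∈ s n₂ → n₁ = n₂)
    {k m : ℕ} : k ∈ pfunInv s m ↔ m ∈ s k := by
  constructor
  · rintro ⟨H, rfl⟩
    exact H.choose_spec.1
  · intro hk
    have H : ∃! n, m ∈ s n := ⟨k, hk, fun y hy => hs hy hk⟩
    exact ⟨H, (H.choose_spec.2 k hk).symm ▸ rfl⟩

section
variable {B : Type*} (ρ : B → Equiv.Perm ℕ) (h : Equiv.Perm ℕ)

lemma mem_listEval_cons {s : ℕ →. ℕ} {x : Option B × Bool} {u : List (Option B × Bool)}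
    {m m' : ℕ} : m' ∈ listEval ρ s (x :: u) m ↔
      ∃ v, v ∈ listEval ρ s u m ∧ m' ∈ letterEval ρ s x v := by
  simp [listEval, PFun.comp_apply, Part.mem_bind_iff]
  exact Part.mem_bind_iff

noncomputable abbrev Wh : FreeGroup (Option B) →* Equiv.Perm ℕ :=
  FreeGroup.lift (fun o : Option B => o.elim h ρ)

lemma W_cons (x : Option B × Bool) (v : List (Option B × Bool)) (k : ℕ) :
    Wh ρ h (FreeGroup.mk (x :: v)) k
      = (if x.2 then (x.1.elim h ρ : Equiv.Perm ℕ) else (x.1.elim h ρ)⁻¹)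
          (Wh ρ h (FreeGroup.mk v) k) := by
  have h1 : FreeGroup.mk (x :: v) = FreeGroup.mk [x] * FreeGroup.mk v := by
    rw [FreeGroup.mul_mk]; rfl
  have h2 : FreeGroup.mk [x] = if x.2 then FreeGroup.of x.1 else (FreeGroup.of x.1)⁻¹ := by
    rcases x with ⟨o, ε⟩
    cases ε
    · simp [FreeGroup.of, FreeGroup.inv_mk, FreeGroup.invRev]
    · simp [FreeGroup.of]
  rw [h1, map_mul, Equiv.Perm.mul_apply, h2]
  cases hx : x.2 <;> simp [FreeGroup.lift_apply_of]
end

section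
variable {B : Type*} (ρ : B → Equiv.Perm ℕ) (h : Equiv.Perm ℕ)

def pureB (l : List (Option B × Bool)) : Prop := ∀ x ∈ l, x.1 ≠ (none : Option B)

lemma pure_eval (s : ℕ →. ℕ) : ∀ (v : List (Option B × Bool)), pureB v →
    ∀ k m', (m' ∈ listEval ρ s v k ↔ m' = Wh ρ h (FreeGroup.mk v) k)
  | [], _, k, m' => by
    simp [listEval, PFun.id, ← FreeGroup.one_eq_mk, Part.mem_some_iff, eq_comm]
  | x :: v, hp, k, m' => by
    have hv : pureB v := fun y hy => hp y (List.mem_cons_of_mem _ hy)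
    obtain ⟨b, hb⟩ : ∃ b, x.1 = some b := by
      rcases x with ⟨o, ε⟩
      cases o
      · exact absurd rfl (hp _ List.mem_cons_self)
      · exact ⟨_, rfl⟩
    rw [mem_listEval_cons, W_cons]
    rcases x with ⟨o, ε⟩
    cases o with
    | none => exact absurd rfl (hp _ List.mem_cons_self)
    | some b =>
      cases ε <;>
        simp [letterEval, pure_eval s v hv k, PFun.lift, Part.mem_some_iff, eq_comm,
          Equiv.Perm.inv_def]
end

lemma mem_pfunExtend {s : ℕ →. ℕ} {n m k j : ℕ} :
    k ∈ pfunExtend s n m j ↔ (j = n ∧ k = m) ∨ (j ≠ n ∧ k ∈ s j) := by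
  unfold pfunExtend
  split_ifs with hj <;> simp [hj, Part.mem_some_iff]

section
variable {B : Type*} (ρ : B → Equiv.Perm ℕ) (h : Equiv.Perm ℕ)
lemma ran_finite {s : ℕ →. ℕ} (hs : s.Dom.Finite) : s.ran.Finite := by
  classical
  have : s.ran ⊆ (fun x => if hx : (s x).Dom then (s x).get hx else 0) '' s.Dom := by
    rintro y ⟨x, hy⟩
    have hx : (s x).Dom := Part.dom_iff_mem.mpr ⟨y, hy⟩
    exact ⟨x, hx, by simp [hx, Part.get_eq_of_mem hy]⟩
  exact (hs.image _).subset this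

lemma finPartInj_extend {s : ℕ →. ℕ} (hs : FinPartInj s) {n : ℕ}
    (hn : n ∉ s.Dom) (hm : h n ∉ s.ran) : FinPartInj (pfunExtend s n (h n)) := by
  constructor
  · have : (pfunExtend s n (h n)).Dom ⊆ insert n s.Dom := by
      intro k hk
      rw [PFun.mem_dom _ _] at hk
      obtain ⟨y, hy⟩ := hk
      rcases mem_pfunExtend.mp hy with ⟨rfl, _⟩ | ⟨_, hy⟩
      · exact Set.mem_insert _ _
      · exact Set.mem_insert_of_mem _ ((PFun.mem_dom _ _).mpr ⟨y, hy⟩)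
    exact (hs.1.insert n).subset this
  · intro k₁ k₂ m h1 h2
    rcases mem_pfunExtend.mp h1 with ⟨rfl, rfl⟩ | ⟨hk1, h1'⟩ <;>
      rcases mem_pfunExtend.mp h2 with ⟨h2a, h2b⟩ | ⟨hk2, h2'⟩
    · rw [h2a]
    · exact absurd ⟨k₂, h2'⟩ hm
    · exact absurd (h2b ▸ ⟨k₁, h1'⟩ : h n ∈ s.ran) hm
    · exact hs.2 h1' h2'

end

section
variable {B : Type*} (ρ : B → Equiv.Perm ℕ) (h : Equiv.Perm ℕ)

lemma W_append (l₁ l₂ : List (Option B × Bool)) (k : ℕ) :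
    Wh ρ h (FreeGroup.mk (l₁ ++ l₂)) k
      = Wh ρ h (FreeGroup.mk l₁) (Wh ρ h (FreeGroup.mk l₂) k) := by
  rw [← FreeGroup.mul_mk, map_mul, Equiv.Perm.mul_apply]

lemma pureB_cons {x : Option B × Bool} {l : List (Option B × Bool)}
    (hx : x.1 ≠ (none : Option B)) (hl : pureB l) : pureB (x :: l) := by
  intro y hy
  rcases List.mem_cons.mp hy with rfl | hy
  · exact hx
  · exact hl y hy

lemma trace {s : ℕ →. ℕ} (hs : FinPartInj s) {n : ℕ}
    (hnd : n ∉ s.Dom ∪ s.ran) (hhnd : h n ∉ s.Dom ∪ s.ran)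
    (U : List (Option B × Bool))
    (hbad : ∀ v : List (Option B × Bool), v.Sublist U → pureB v → ∀ z ∈ s.Dom ∪ s.ran,
      Wh ρ h (FreeGroup.mk v) z ≠ n ∧ Wh ρ h (FreeGroup.mk v) z ≠ h n ∧
      (Wh ρ h (FreeGroup.mk v))⁻¹ z ≠ n ∧ (Wh ρ h (FreeGroup.mk v))⁻¹ z ≠ h n) :
    ∀ u : List (Option B × Bool), u.Sublist U → ∀ m m' : ℕ,
      m' ∈ listEval ρ (pfunExtend s n (h n)) u m →
      (m' ∈ listEval ρ s u m ∧
        ((pureB u ∧ m' = Wh ρ h (FreeGroup.mk u) m) ∨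
          ∃ p z, (∃ q, u = p ++ q) ∧ pureB p ∧ z ∈ s.Dom ∪ s.ran ∧
            m' = Wh ρ h (FreeGroup.mk p) z)) ∨
      (m' = Wh ρ h (FreeGroup.mk u) m ∧
        ∃ u₂ c u₁, ∃ ε₁ ε₂ : Bool, u = u₂ ++ c ++ u₁ ∧ pureB u₂ ∧ pureB u₁ ∧
          c.head? = some ((none : Option B), ε₁) ∧ c.getLast? = some ((none : Option B), ε₂) ∧
          Wh ρ h (FreeGroup.mk (c ++ u₁)) m = (if ε₁ then h n else n) ∧
          Wh ρ h (FreeGroup.mk u₁) m = (if ε₂ then n else h n)) := by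
  have t_inj : ∀ ⦃k₁ k₂ m : ℕ⦄, m ∈ pfunExtend s n (h n) k₁ → m ∈ pfunExtend s n (h n) k₂ →
      k₁ = k₂ :=
    (finPartInj_extend h hs (fun hd => hnd (Or.inl hd)) (fun hr => hhnd (Or.inr hr))).2
  intro u
  induction u with
  | nil =>
    intro _ m m' hm
    left
    have hm' : m' = m := by simpa [listEval, PFun.id] using hm
    refine ⟨by simpa [listEval, PFun.id] using hm, Or.inl ⟨fun x hx => absurd hx (by simp), ?_⟩⟩
    simp [hm', ← FreeGroup.one_eq_mk]
  | cons x u ih =>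
    intro hsub m m'' hmem
    have hsubu : u.Sublist U := ((List.sublist_cons_self x u).trans hsub)
    obtain ⟨v, hv, hstep⟩ := mem_listEval_cons ρ |>.mp hmem
    have IH := ih hsubu m v hv
    rcases x with ⟨o, ε⟩
    cases o with
    | some b =>
      -- the step is a total permutation step
      have hsame : letterEval ρ s (some b, ε) = letterEval ρ (pfunExtend s n (h n)) (some b, ε) := by
        cases ε <;> rfl
      have hstep' : m'' = (if ε then (ρ b : Equiv.Perm ℕ) else (ρ b)⁻¹) v := by
        cases ε <;> simpa [letterEval, PFun.lift, Part.mem_some_iff, Equiv.Perm.inv_def,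
          eq_comm] using hstep
      have hW : ∀ k, Wh ρ h (FreeGroup.mk ((some b, ε) :: u)) k
          = (if ε then (ρ b : Equiv.Perm ℕ) else (ρ b)⁻¹) (Wh ρ h (FreeGroup.mk u) k) := by
        intro k; rw [W_cons]; cases ε <;> rfl
      rcases IH with ⟨hA, hcase⟩ | ⟨hval, u₂, c, u₁, ε₁, ε₂, hdec, hp2, hp1, hh, hl, hout, hy⟩
      · left
        refine ⟨mem_listEval_cons ρ |>.mpr ⟨v, hA, hsame ▸ hstep⟩, ?_⟩
        rcases hcase with ⟨hpu, hvv⟩ | ⟨p, z, ⟨q, hq⟩, hpp, hz, hvv⟩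
        · exact Or.inl ⟨pureB_cons (by simp) hpu,
            by rw [hW, ← hvv, hstep']⟩
        · refine Or.inr ⟨(some b, ε) :: p, z, ⟨q, by rw [hq]; rfl⟩,
            pureB_cons (by simp) hpp, hz, ?_⟩
          have : ∀ k, Wh ρ h (FreeGroup.mk ((some b, ε) :: p)) k
              = (if ε then (ρ b : Equiv.Perm ℕ) else (ρ b)⁻¹) (Wh ρ h (FreeGroup.mk p) k) := by
            intro k; rw [W_cons]; cases ε <;> rfl
          rw [this, ← hvv, hstep']
      · right
        refine ⟨by rw [hW, ← hval, hstep'], (some b, ε) :: u₂, c, u₁, ε₁, ε₂,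
          by rw [hdec]; rfl, pureB_cons (by simp) hp2,
          hp1, hh, hl, hout, hy⟩
    | none =>
      cases ε with
      | true =>
        -- the step uses s or the new pair (n, h n)
        rcases mem_pfunExtend.mp hstep with ⟨hveq, hmeq⟩ | ⟨hvn, hsv⟩
        · subst v; subst hmeq
          have hWx : Wh ρ h (FreeGroup.mk ((none, true) :: u)) m
              = h (Wh ρ h (FreeGroup.mk u) m) := by
            rw [W_cons]; rfl
          rcases IH with ⟨hA, hcase⟩ | ⟨hval, u₂, c, u₁, ε₁, ε₂, hdec, hp2, hp1, hh, hl, hout, hy⟩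
          · rcases hcase with ⟨hpu, hvv⟩ | ⟨p, z, ⟨q, hq⟩, hpp, hz, hvv⟩
            · -- go to case B with c = [x]
              right
              refine ⟨by rw [hWx, ← hvv], [], [((none : Option B), true)], u, true, true,
                rfl, by simp [pureB], hpu, rfl, rfl, ?_, by rw [← hvv]; rfl⟩
              show Wh ρ h (FreeGroup.mk ([((none : Option B), true)] ++ u)) m = h n
              rw [List.singleton_append, hWx, ← hvv]
            · -- contradiction with hbad
              exact absurd hvv.symm ((hbad p ((hq ▸ List.sublist_append_left p q).trans hsubu)
                hpp z hz).1)
          · -- extend c to the left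
            right
            have hcne : c ≠ [] := by
              intro hc; rw [hc] at hh; simp at hh
            have hdecc : ((none, true) :: (u₂ ++ c)) ++ u₁ = ((none : Option B), true) :: u := by
              rw [hdec]; simp
            refine ⟨by rw [hWx, ← hval], [], ((none, true) :: (u₂ ++ c)), u₁, true, ε₂,
              hdecc.symm, by simp [pureB], hp1, rfl, ?_, ?_, hy⟩
            · have h1 : (((none : Option B), true) :: (u₂ ++ c)).getLast? = (u₂ ++ c).getLast? := by
                have : ((none : Option B), true) :: (u₂ ++ c) = [((none : Option B), true)] ++ (u₂ ++ c) := rfl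
                rw [this, List.getLast?_append_of_ne_nil _ (by simp [hcne])]
              rw [h1, List.getLast?_append_of_ne_nil _ hcne, hl]
            · show Wh ρ h (FreeGroup.mk (((none, true) :: (u₂ ++ c)) ++ u₁)) m = h n
              rw [hdecc, hWx, ← hval]
        · -- s-step
          have hvds : v ∈ s.Dom ∪ s.ran := Or.inl ((PFun.mem_dom _ _).mpr ⟨m'', hsv⟩)
          rcases IH with ⟨hA, hcase⟩ | ⟨hval, u₂, c, u₁, ε₁, ε₂, hdec, hp2, hp1, hh, hl, hout, hy⟩
          · left
            refine ⟨mem_listEval_cons ρ |>.mpr ⟨v, hA, hsv⟩, Or.inr ⟨[], m'',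
              ⟨(none, true) :: u, rfl⟩, by simp [pureB], Or.inr ⟨v, hsv⟩, ?_⟩⟩
            simp [← FreeGroup.one_eq_mk]
          · -- contradiction with hbad on u₂
            exfalso
            have hu2 : u = u₂ ++ (c ++ u₁) := by rw [hdec]; simp
            have hvv : v = Wh ρ h (FreeGroup.mk u₂) (if ε₁ then h n else n) := by
              rw [hval, hu2, W_append, hout]
            have hsubu2 : u₂.Sublist U :=
              ((hu2 ▸ List.sublist_append_left u₂ (c ++ u₁)).trans hsubu)
            have := hbad u₂ hsubu2 hp2 v hvds
            have hinv : (Wh ρ h (FreeGroup.mk u₂))⁻¹ v = (if ε₁ then h n else n) := by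
              rw [hvv]; simp
            cases ε₁ with
            | true => exact this.2.2.2 (by simpa using hinv)
            | false => exact this.2.2.1 (by simpa using hinv)
      | false =>
        have hstep2 : v ∈ pfunExtend s n (h n) m'' := (mem_pfunInv t_inj).mp hstep
        rcases mem_pfunExtend.mp hstep2 with ⟨hmeq, hveq⟩ | ⟨hvn, hsv⟩
        · subst v; subst m''
          have hWx : ∀ k, Wh ρ h (FreeGroup.mk ((none, false) :: u)) k
              = h⁻¹ (Wh ρ h (FreeGroup.mk u) k) := by
            intro k; rw [W_cons]; rfl
          rcases IH with ⟨hA, hcase⟩ | ⟨hval, u₂, c, u₁, ε₁, ε₂, hdec, hp2, hp1, hh, hl, hout, hy⟩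
          · rcases hcase with ⟨hpu, hvv⟩ | ⟨p, z, ⟨q, hq⟩, hpp, hz, hvv⟩
            · right
              refine ⟨by rw [hWx, ← hvv]; simp, [], [((none : Option B), false)], u, false, false,
                rfl, by simp [pureB], hpu, rfl, rfl, ?_, by rw [← hvv]; rfl⟩
              show Wh ρ h (FreeGroup.mk (((none : Option B), false) :: u)) m = n
              rw [hWx, ← hvv]; simp
            · exact absurd hvv.symm ((hbad p ((hq ▸ List.sublist_append_left p q).trans hsubu)
                hpp z hz).2.1)
          · right
            have hcne : c ≠ [] := by
              intro hc; rw [hc] at hh; simp at hh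
            have hdecc : ((none, false) :: (u₂ ++ c)) ++ u₁ = ((none : Option B), false) :: u := by
              rw [hdec]; simp
            refine ⟨by rw [hWx, ← hval]; simp, [], ((none, false) :: (u₂ ++ c)), u₁, false, ε₂,
              hdecc.symm, by simp [pureB], hp1, rfl, ?_, ?_, hy⟩
            · have h1 : (((none : Option B), false) :: (u₂ ++ c)).getLast? = (u₂ ++ c).getLast? := by
                have : ((none : Option B), false) :: (u₂ ++ c) = [((none : Option B), false)] ++ (u₂ ++ c) := rfl
                rw [this, List.getLast?_append_of_ne_nil _ (by simp [hcne])]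
              rw [h1, List.getLast?_append_of_ne_nil _ hcne, hl]
            · show Wh ρ h (FreeGroup.mk (((none, false) :: (u₂ ++ c)) ++ u₁)) m = n
              rw [hdecc, hWx, ← hval]; simp
        · -- s-step backwards: v ∈ s m'', m'' ∈ dom s, v ∈ ran s
          have hvds : v ∈ s.Dom ∪ s.ran := Or.inr ⟨m'', hsv⟩
          rcases IH with ⟨hA, hcase⟩ | ⟨hval, u₂, c, u₁, ε₁, ε₂, hdec, hp2, hp1, hh, hl, hout, hy⟩
          · left
            refine ⟨mem_listEval_cons ρ |>.mpr ⟨v, hA, (mem_pfunInv hs.2).mpr hsv⟩,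
              Or.inr ⟨[], m'', ⟨(none, false) :: u, rfl⟩, by simp [pureB],
                Or.inl ((PFun.mem_dom _ _).mpr ⟨v, hsv⟩), ?_⟩⟩
            simp [← FreeGroup.one_eq_mk]
          · exfalso
            have hu2 : u = u₂ ++ (c ++ u₁) := by rw [hdec]; simp
            have hvv : v = Wh ρ h (FreeGroup.mk u₂) (if ε₁ then h n else n) := by
              rw [hval, hu2, W_append, hout]
            have hsubu2 : u₂.Sublist U :=
              ((hu2 ▸ List.sublist_append_left u₂ (c ++ u₁)).trans hsubu)
            have := hbad u₂ hsubu2 hp2 v hvds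
            have hinv : (Wh ρ h (FreeGroup.mk u₂))⁻¹ v = (if ε₁ then h n else n) := by
              rw [hvv]; simp
            cases ε₁ with
            | true => exact this.2.2.2 (by simpa using hinv)
            | false => exact this.2.2.1 (by simpa using hinv)
end

/-- Generic Hitting (density form): if the homomorphism determined by `a ↦ h`, `b ↦ ρ b`
is injective with cofinitary image, and `h` differs from every member of the finite set `s*`
of bijections at infinitely many points, then every condition `(s,F)` and every `N` admit an
`n ≥ N` outside `dom s` with `h(n) ≠ f(n)` for all `f ∈ s*` such that `(s ∪ {(n,h(n))}, F)`
is a condition extending `(s,F)`. -/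
theorem generic_hitting {B : Type*} (ρ : B → Equiv.Perm ℕ) (h : Equiv.Perm ℕ)
    (hinj : Function.Injective (FreeGroup.lift (fun o : Option B => o.elim h ρ)))
    (hcof : IsCofinitaryGroup (FreeGroup.lift (fun o : Option B => o.elim h ρ)).range)
    (sstar : Set (Equiv.Perm ℕ)) (hstar : sstar.Finite)
    (hinf : {n : ℕ | ∀ f ∈ sstar, h n ≠ f n}.Infinite)
    (s : ℕ →. ℕ) (F : Set (FreeGroup (Option B))) (hp : IsCondition (s, F)) (N : ℕ) :
    ∃ n : ℕ, N ≤ n ∧ n ∉ s.Dom ∧ (∀ f ∈ sstar, h n ≠ f n) ∧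
      IsCondition (pfunExtend s n (h n), F) ∧
      Extends ρ (pfunExtend s n (h n), F) (s, F) := by
  classical
  obtain ⟨hps, hPF, hPG⟩ := hp

  set DS : Set ℕ := s.Dom ∪ s.ran with hDSdef
  have hDS : DS.Finite := hps.1.union (ran_finite hps.1)
  have hWne : ∀ w ∈ F, Wh ρ h w ≠ 1 := by
    intro w hw heq
    exact (hPG w hw).1 (hinj (heq.trans (map_one _).symm))
  have hFx : ∀ w ∈ F, {z : ℕ | Wh ρ h w z = z}.Finite := by
    intro w hw
    exact hcof _ ⟨w, rfl⟩ (hWne w hw)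
  -- the bad set for a word w
  set Bad : FreeGroup (Option B) → Set ℕ := fun w =>
    {k | ∃ v : List (Option B × Bool), v.Sublist (reducedWord w) ∧
      ((∃ z ∈ DS, Wh ρ h (FreeGroup.mk v) z = k ∨ Wh ρ h (FreeGroup.mk v) z = h k ∨
          (Wh ρ h (FreeGroup.mk v))⁻¹ z = k ∨ (Wh ρ h (FreeGroup.mk v))⁻¹ z = h k) ∨
        (∃ z, Wh ρ h w z = z ∧ (Wh ρ h (FreeGroup.mk v) z = k ∨
          Wh ρ h (FreeGroup.mk v) z = h k)))} with hBaddef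
  have hBadFin : ∀ w ∈ F, (Bad w).Finite := by
    intro w hw
    have hsubfin : {l : List (Option B × Bool) | l.Sublist (reducedWord w)}.Finite := by
      apply Set.Finite.subset ((reducedWord w).sublists.toFinset : Finset _).finite_toSet
      intro l hl
      simpa using List.mem_sublists.mpr hl
    have big : (Bad w) ⊆ ⋃ v ∈ {l : List (Option B × Bool) | l.Sublist (reducedWord w)},
        (⇑(Wh ρ h (FreeGroup.mk v)) '' DS ∪ ⇑h.symm '' (⇑(Wh ρ h (FreeGroup.mk v)) '' DS) ∪
          ⇑(Wh ρ h (FreeGroup.mk v))⁻¹ '' DS ∪ ⇑h.symm '' (⇑(Wh ρ h (FreeGroup.mk v))⁻¹ '' DS) ∪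
          ⇑(Wh ρ h (FreeGroup.mk v)) '' {z : ℕ | Wh ρ h w z = z} ∪
          ⇑h.symm '' (⇑(Wh ρ h (FreeGroup.mk v)) '' {z : ℕ | Wh ρ h w z = z})) := by
      rintro k ⟨v, hv, H⟩
      refine Set.mem_iUnion₂.mpr ⟨v, hv, ?_⟩
      simp only [Set.mem_union]
      rcases H with ⟨z, hz, rfl | hk | rfl | hk⟩ | ⟨z, hzf, rfl | hk⟩
      · exact Or.inl (Or.inl (Or.inl (Or.inl (Or.inl ⟨z, hz, rfl⟩))))
      · refine Or.inl (Or.inl (Or.inl (Or.inl (Or.inr ⟨_, ⟨z, hz, rfl⟩, ?_⟩))))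
        rw [hk]; simp
      · exact Or.inl (Or.inl (Or.inl (Or.inr ⟨z, hz, rfl⟩)))
      · refine Or.inl (Or.inl (Or.inr ⟨_, ⟨z, hz, rfl⟩, ?_⟩))
        rw [hk]; simp
      · exact Or.inl (Or.inr ⟨z, hzf, rfl⟩)
      · refine Or.inr ⟨_, ⟨z, hzf, rfl⟩, ?_⟩
        rw [hk]; simp
    refine Set.Finite.subset (Set.Finite.biUnion hsubfin fun v _ => ?_) big
    exact (((((hDS.image _).union ((hDS.image _).image _)).union (hDS.image _)).union
      ((hDS.image _).image _)).union ((hFx w hw).image _)).union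
      (((hFx w hw).image _).image _)
  -- choose n
  set E : Set ℕ := (DS ∪ ⇑h.symm '' DS) ∪ ⋃ w ∈ F, Bad w with hEdef
  have hE : E.Finite :=
    (hDS.union (hDS.image _)).union (hPF.biUnion fun w hw => hBadFin w hw)
  obtain ⟨n, hnmem, hNn⟩ := (hinf.diff hE).exists_gt N
  obtain ⟨hnA, hnE⟩ := hnmem
  have hnDS : n ∉ DS := fun hx => hnE (Or.inl (Or.inl hx))
  have hhnDS : h n ∉ DS := fun hx => hnE (Or.inl (Or.inr ⟨h n, hx, by simp⟩))
  have hnBad : ∀ w ∈ F, n ∉ Bad w := fun w hw hx => hnE (Or.inr (Set.mem_biUnion hw hx))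
  have hndom : n ∉ s.Dom := fun hx => hnDS (Or.inl hx)
  have hnran : h n ∉ s.ran := fun hx => hhnDS (Or.inr hx)
  refine ⟨n, le_of_lt hNn, hndom, hnA,
    ⟨finPartInj_extend h hps hndom hnran, hPF, hPG⟩, ?_, le_refl F, ?_⟩
  · intro k m hm
    refine mem_pfunExtend.mpr (Or.inr ⟨?_, hm⟩)
    rintro rfl
    exact hndom ((PFun.mem_dom _ _).mpr ⟨m, hm⟩)
  · intro w hw m hm
    have hbadw : ∀ v : List (Option B × Bool), v.Sublist (reducedWord w) → pureB v →
        ∀ z ∈ s.Dom ∪ s.ran,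
        Wh ρ h (FreeGroup.mk v) z ≠ n ∧ Wh ρ h (FreeGroup.mk v) z ≠ h n ∧
        (Wh ρ h (FreeGroup.mk v))⁻¹ z ≠ n ∧ (Wh ρ h (FreeGroup.mk v))⁻¹ z ≠ h n := by
      intro v hv _ z hz
      refine ⟨fun heq => hnBad w hw ⟨v, hv, Or.inl ⟨z, hz, Or.inl heq⟩⟩,
        fun heq => hnBad w hw ⟨v, hv, Or.inl ⟨z, hz, Or.inr (Or.inl heq)⟩⟩,
        fun heq => hnBad w hw ⟨v, hv, Or.inl ⟨z, hz, Or.inr (Or.inr (Or.inl heq))⟩⟩,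
        fun heq => hnBad w hw ⟨v, hv, Or.inl ⟨z, hz, Or.inr (Or.inr (Or.inr heq))⟩⟩⟩
    rcases trace ρ h hps hnDS hhnDS (reducedWord w) hbadw (reducedWord w)
        (List.Sublist.refl _) m m hm with
      ⟨hmem, _⟩ | ⟨hval, u₂, c, u₁, ε₁, ε₂, hdec, _, _, hh', hl', hout, hy⟩
    · exact Part.dom_iff_mem.mpr ⟨m, hmem⟩
    · exfalso
      have hmk : FreeGroup.mk (reducedWord w) = w :=
        @FreeGroup.mk_toWord _ (Classical.decEq _) w
      have hfix : Wh ρ h w m = m := by rw [← hmk]; exact hval.symm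
      have hsubu1 : u₁.Sublist (reducedWord w) := by
        rw [hdec]
        exact List.sublist_append_right (u₂ ++ c) u₁
      apply hnBad w hw
      refine ⟨u₁, hsubu1, Or.inr ⟨m, hfix, ?_⟩⟩
      cases ε₂ with
      | true => exact Or.inl (by simpa using hy)
      | false => exact Or.inr (by simpa using hy)
end
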